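/- arXiv:2103.10482 — 9 statements merged into one kernel-verified Lean document; each statement's English description precedes it below -/
import Mathlib

section
/- Suppose N : V → V' satisfies Assumption (N) with data (C_N, n, (ζ₁ⱼ), (ζ₂ⱼ), (δ₁ⱼ), (δ₂ⱼ)), and set ‖δ₂‖ := max_{1≤j≤n} δ₂ⱼ. Then there exists a constant C̄ > 0, depending only on n, C_N and 1/(1 − ‖δ₂‖), such that for every γ > 0 and all y₁, y₂ ∈ V: 2·⟨N(y₁) − N(y₂), y₁ − y₂⟩ ≤ γ·‖y₁ − y₂‖_V² + (1 + γ^{-(1+‖δ₂‖)/(1−‖δ₂‖)})·C̄·Σ_{j=1}^{n} ( ‖y₁‖_H^{2ζ₁ⱼ/(1−δ₂ⱼ)} ‖y₁‖_V^{2ζ₂ⱼ/(1−δ₂ⱼ)} + ‖y₂‖_H^{2ζ₁ⱼ/(1−δ₂ⱼ)} ‖y₂‖_V^{2ζ₂ⱼ/(1−δ₂ⱼ)} )·‖y₁ − y₂‖_H^{2δ₁ⱼ/(1−δ₂ⱼ)}. (Lemma 3.3 of the paper.) -/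
/-!
Bound the pairing by `‖N y₁ - N y₂‖_{V'} ‖y₁ - y₂‖_V` and use (N): with `a = ‖y₁ - y₂‖_V`, the
`j`-th summand has the form `a ^ (1 + δ₂ⱼ) * b`. Young's inequality with the conjugate exponents
`2 / (1 + δ₂ⱼ)`, `2 / (1 - δ₂ⱼ)` and weight `γ / n` splits it into `γ / n * a ^ 2` and
`(γ / n) ^ (-(1 + δ₂ⱼ) / (1 - δ₂ⱼ)) * b ^ (2 / (1 - δ₂ⱼ))`. As `δ₂ⱼ ≤ ‖δ₂‖ < 1`, the powers of `γ`,
`n` and `C_N` in the second term are bounded uniformly in `j` by the ones built from `‖δ₂‖`,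
using `γ ^ (-m) ≤ 1 + γ ^ (-M)` for `0 ≤ m ≤ M`.
-/

namespace Real

theorem young_inequality_weighted {a b ε p q : ℝ} (ha : 0 ≤ a) (hb : 0 ≤ b) (hε : 0 < ε)
    (hpq : p.HolderConjugate q) :
    a * b ≤ ε * a ^ p + ε ^ (-(q / p)) * b ^ q := by
  have young := young_inequality_of_nonneg (mul_nonneg (rpow_nonneg hε.le p⁻¹) ha)
    (mul_nonneg (rpow_nonneg hε.le (-p⁻¹)) hb) hpq
  rw [mul_mul_mul_comm, ← rpow_add hε, add_neg_cancel, rpow_zero, one_mul,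
    mul_rpow (rpow_nonneg hε.le _) ha, mul_rpow (rpow_nonneg hε.le _) hb,
    ← rpow_mul hε.le, ← rpow_mul hε.le, inv_mul_cancel₀ hpq.ne_zero, rpow_one,
    neg_mul, inv_mul_eq_div] at young
  have hp := div_le_self (by positivity : 0 ≤ ε * a ^ p) hpq.lt.le
  have hq := div_le_self (by positivity : 0 ≤ ε ^ (-(q / p)) * b ^ q) hpq.symm.lt.le
  linarith

theorem young_inequality_sq_weighted {a b d ε : ℝ} (ha : 0 ≤ a) (hb : 0 ≤ b) (hε : 0 < ε)
    (hd₀ : -1 < d) (hd₁ : d < 1) :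
    a ^ (1 + d) * b ≤ ε * a ^ 2 + ε ^ (-((1 + d) / (1 - d))) * b ^ (2 / (1 - d)) := by
  have h1d : 0 < 1 - d := by linarith
  have h1d' : 0 < 1 + d := by linarith
  have hpq : (2 / (1 + d)).HolderConjugate (2 / (1 - d)) := by
    rw [holderConjugate_iff, one_lt_div h1d', inv_div, inv_div]
    exact ⟨by linarith, by field_simp; ring⟩
  have young := young_inequality_weighted (rpow_nonneg ha (1 + d)) hb hε hpq
  rwa [← rpow_mul ha, mul_div_cancel₀ _ h1d'.ne', rpow_two,
    div_div_div_cancel_left' _ _ two_ne_zero] at young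

theorem rpow_neg_le_one_add_rpow_neg {γ m M : ℝ} (hγ : 0 < γ) (hm : 0 ≤ m) (hmM : m ≤ M) :
    γ ^ (-m) ≤ 1 + γ ^ (-M) := by
  rcases le_or_gt 1 γ with hγ1 | hγ1
  · linarith [rpow_le_one_of_one_le_of_nonpos hγ1 (neg_nonpos.mpr hm), rpow_nonneg hγ.le (-M)]
  · linarith [rpow_le_rpow_of_exponent_ge hγ hγ1.le (neg_le_neg hmM)]

theorem rpow_le_one_add_rpow {b q Q : ℝ} (hb : 0 ≤ b) (hq : 0 ≤ q) (hqQ : q ≤ Q) :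
    b ^ q ≤ (1 + b) ^ Q :=
  calc b ^ q ≤ (1 + b) ^ q := by gcongr; linarith
    _ ≤ (1 + b) ^ Q := rpow_le_rpow_of_exponent_le (by linarith) hqQ

theorem add_rpow_le_two_rpow_mul_rpow_add_rpow {a b p : ℝ} (ha : 0 ≤ a) (hb : 0 ≤ b)
    (hp : 0 ≤ p) : (a + b) ^ p ≤ 2 ^ p * (a ^ p + b ^ p) :=
  calc (a + b) ^ p ≤ (2 * max a b) ^ p := by
        gcongr
        rw [two_mul]
        exact add_le_add (le_max_left a b) (le_max_right a b)
    _ = 2 ^ p * max a b ^ p := mul_rpow zero_le_two (le_max_of_le_left ha)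
    _ ≤ 2 ^ p * (a ^ p + b ^ p) := by
        gcongr
        rcases le_total a b with h | h
        · rw [max_eq_right h]; linarith [rpow_nonneg ha p]
        · rw [max_eq_left h]; linarith [rpow_nonneg hb p]

theorem div_rpow_neg_le {γ c m M : ℝ} (hγ : 0 < γ) (hc : 1 ≤ c) (hm : 0 ≤ m) (hmM : m ≤ M) :
    (γ / c) ^ (-m) ≤ (1 + γ ^ (-M)) * c ^ M := by
  rw [div_rpow hγ.le (by linarith), rpow_neg (by linarith : (0:ℝ) ≤ c), div_inv_eq_mul]
  gcongr
  exact rpow_neg_le_one_add_rpow_neg hγ hm hmM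

theorem rpow_mul_rpow_rpow_two_div {x w α β d : ℝ} (hx : 0 ≤ x) (hw : 0 ≤ w) :
    (x ^ α * w ^ β) ^ (2 / (1 - d)) = x ^ (2 * α / (1 - d)) * w ^ (2 * β / (1 - d)) := by
  rw [mul_rpow (rpow_nonneg hx α) (rpow_nonneg hw β), ← rpow_mul hx, ← rpow_mul hw,
    mul_div_assoc', mul_div_assoc', mul_comm α, mul_comm β]

end Real

open Real

theorem two_mul_summand_le {C c γ a h u₁ u₂ δ d S : ℝ} (hC : 0 ≤ C) (hc : 1 ≤ c) (hγ : 0 < γ)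
    (ha : 0 ≤ a) (hh : 0 ≤ h) (hu₁ : 0 ≤ u₁) (hu₂ : 0 ≤ u₂) (hd : -1 < d) (hdS : d ≤ S)
    (hS : S < 1) :
    2 * (C * ((u₁ + u₂) * (h ^ δ * a ^ d)) * a) ≤
      γ / c * a ^ 2 + (1 + γ ^ (-(1 + S) / (1 - S))) *
        (c ^ ((1 + S) / (1 - S)) * (1 + 4 * C) ^ (2 / (1 - S))) *
        ((u₁ ^ (2 / (1 - d)) + u₂ ^ (2 / (1 - d))) * h ^ (2 * δ / (1 - d))) := by
  have h1d : 0 < 1 - d := by linarith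
  have h1S : 0 < 1 - S := by linarith
  set q := 2 / (1 - d)
  have hq : 0 ≤ q := by positivity
  have hqQ : q ≤ 2 / (1 - S) := by unfold q; gcongr
  have hm : 0 ≤ (1 + d) / (1 - d) := div_nonneg (by linarith) h1d.le
  have hmM : (1 + d) / (1 - d) ≤ (1 + S) / (1 - S) := by
    rw [div_le_div_iff₀ h1d h1S]; nlinarith
  have hweight : (γ / c) ^ (-((1 + d) / (1 - d))) ≤
      (1 + γ ^ (-(1 + S) / (1 - S))) * c ^ ((1 + S) / (1 - S)) := by
    rw [neg_div]; exact div_rpow_neg_le hγ hc hm hmM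
  have hpow : (2 * C * (u₁ + u₂) * h ^ δ) ^ q ≤
      (1 + 4 * C) ^ (2 / (1 - S)) * ((u₁ ^ q + u₂ ^ q) * h ^ (2 * δ / (1 - d))) :=
    calc (2 * C * (u₁ + u₂) * h ^ δ) ^ q
          = (2 * C) ^ q * (u₁ + u₂) ^ q * h ^ (2 * δ / (1 - d)) := by
          rw [mul_rpow (by positivity) (by positivity), mul_rpow (by positivity) (by positivity),
            ← rpow_mul hh, mul_div_assoc', mul_comm δ]
      _ ≤ (2 * C) ^ q * (2 ^ q * (u₁ ^ q + u₂ ^ q)) * h ^ (2 * δ / (1 - d)) := by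
          gcongr; exact add_rpow_le_two_rpow_mul_rpow_add_rpow hu₁ hu₂ hq
      _ = ((2 * C) ^ q * 2 ^ q) * ((u₁ ^ q + u₂ ^ q) * h ^ (2 * δ / (1 - d))) := by ring
      _ ≤ _ := by
          gcongr
          rw [← mul_rpow (by positivity) zero_le_two, show 2 * C * 2 = 4 * C by ring]
          exact rpow_le_one_add_rpow (by positivity) hq hqQ
  calc 2 * (C * ((u₁ + u₂) * (h ^ δ * a ^ d)) * a)
      = a ^ (1 + d) * (2 * C * (u₁ + u₂) * h ^ δ) := by
        rw [rpow_add' ha (by linarith), rpow_one]; ring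
    _ ≤ γ / c * a ^ 2 + (γ / c) ^ (-((1 + d) / (1 - d))) * (2 * C * (u₁ + u₂) * h ^ δ) ^ q :=
        young_inequality_sq_weighted ha (by positivity) (by positivity) hd (by linarith)
    _ ≤ γ / c * a ^ 2 + (1 + γ ^ (-(1 + S) / (1 - S))) * c ^ ((1 + S) / (1 - S)) *
          ((1 + 4 * C) ^ (2 / (1 - S)) * ((u₁ ^ q + u₂ ^ q) * h ^ (2 * δ / (1 - d)))) := by
        gcongr
    _ = _ := by ring

theorem two_mul_sum_le {n : ℕ} {C γ a h x₁ w₁ x₂ w₂ S : ℝ} {ζ₁ ζ₂ δ₁ δ₂ : Fin n → ℝ}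
    (hC : 0 ≤ C) (hn : 1 ≤ n) (hγ : 0 < γ) (ha : 0 ≤ a) (hh : 0 ≤ h) (hx₁ : 0 ≤ x₁) (hw₁ : 0 ≤ w₁)
    (hx₂ : 0 ≤ x₂) (hw₂ : 0 ≤ w₂) (hδ₂ : ∀ k, -1 < δ₂ k) (hδ₂S : ∀ k, δ₂ k ≤ S) (hS : S < 1) :
    2 * ((C * ∑ k, (x₁ ^ ζ₁ k * w₁ ^ ζ₂ k + x₂ ^ ζ₁ k * w₂ ^ ζ₂ k) * (h ^ δ₁ k * a ^ δ₂ k)) * a) ≤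
      γ * a ^ 2 + (1 + γ ^ (-(1 + S) / (1 - S))) *
        (n ^ ((1 + S) / (1 - S)) * (1 + 4 * C) ^ (2 / (1 - S))) *
        ∑ k, (x₁ ^ (2 * ζ₁ k / (1 - δ₂ k)) * w₁ ^ (2 * ζ₂ k / (1 - δ₂ k)) +
            x₂ ^ (2 * ζ₁ k / (1 - δ₂ k)) * w₂ ^ (2 * ζ₂ k / (1 - δ₂ k))) *
          h ^ (2 * δ₁ k / (1 - δ₂ k)) := by
  have hn' : (1 : ℝ) ≤ n := Nat.one_le_cast.mpr hn
  have hγ_split : γ * a ^ 2 = ∑ _k : Fin n, γ / n * a ^ 2 := by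
    rw [Finset.sum_const, Finset.card_univ, Fintype.card_fin, nsmul_eq_mul, ← mul_assoc,
      mul_div_cancel₀ γ (by positivity)]
  rw [hγ_split, Finset.mul_sum, Finset.sum_mul, Finset.mul_sum, Finset.mul_sum,
    ← Finset.sum_add_distrib]
  refine Finset.sum_le_sum fun k _ => ?_
  have := two_mul_summand_le (δ := δ₁ k) hC hn' hγ ha hh
    (by positivity : 0 ≤ x₁ ^ ζ₁ k * w₁ ^ ζ₂ k) (by positivity : 0 ≤ x₂ ^ ζ₁ k * w₂ ^ ζ₂ k)
    (hδ₂ k) (hδ₂S k) hS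
  rwa [rpow_mul_rpow_rpow_two_div hx₁ hw₁, rpow_mul_rpow_rpow_two_div hx₂ hw₂] at this

theorem stmt1_general
    {H V : Type*}
    [NormedAddCommGroup H] [InnerProductSpace ℝ H]
    [NormedAddCommGroup V] [InnerProductSpace ℝ V]
    (ι : V →L[ℝ] H)
    (N : V → (V →L[ℝ] ℝ))
    (CN : ℝ) (hCN : 0 ≤ CN) (n : ℕ) (hn : 1 ≤ n)
    (ζ₁ ζ₂ δ₁ δ₂ : Fin n → ℝ)
    (hζ₂ : ∀ k, 0 ≤ ζ₂ k)
    (hδ₂ : ∀ k, 0 ≤ δ₂ k)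
    (hlt : ∀ k, ζ₂ k + δ₂ k < 1)
    (hN : ∀ y₁ y₂ : V,
      ‖N y₁ - N y₂‖ ≤ CN * ∑ k : Fin n,
        (‖ι y₁‖ ^ ζ₁ k * ‖y₁‖ ^ ζ₂ k + ‖ι y₂‖ ^ ζ₁ k * ‖y₂‖ ^ ζ₂ k) *
          (‖ι (y₁ - y₂)‖ ^ δ₁ k * ‖y₁ - y₂‖ ^ δ₂ k)) :
    ∃ Cb : ℝ, 0 < Cb ∧ ∀ γ : ℝ, 0 < γ → ∀ y₁ y₂ : V,
      2 * (N y₁ - N y₂) (y₁ - y₂)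
        ≤ γ * ‖y₁ - y₂‖ ^ 2
          + (1 + γ ^ (-(1 + ⨆ k, δ₂ k) / (1 - ⨆ k, δ₂ k))) * Cb *
            ∑ k : Fin n,
              (‖ι y₁‖ ^ (2 * ζ₁ k / (1 - δ₂ k)) * ‖y₁‖ ^ (2 * ζ₂ k / (1 - δ₂ k))
                + ‖ι y₂‖ ^ (2 * ζ₁ k / (1 - δ₂ k)) * ‖y₂‖ ^ (2 * ζ₂ k / (1 - δ₂ k))) *
              ‖ι (y₁ - y₂)‖ ^ (2 * δ₁ k / (1 - δ₂ k)) := by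
  have : Nonempty (Fin n) := ⟨⟨0, hn⟩⟩
  set S := ⨆ k, δ₂ k
  have hδ₂_lt : ∀ k, δ₂ k < 1 := fun k => by linarith [hlt k, hζ₂ k]
  have hS : S < 1 := by
    obtain ⟨k₀, hk₀⟩ := exists_eq_ciSup_of_finite (f := δ₂)
    exact hk₀.symm.trans_lt (hδ₂_lt k₀)
  have hn' : (0 : ℝ) < n := Nat.cast_pos.mpr hn
  refine ⟨n ^ ((1 + S) / (1 - S)) * (1 + 4 * CN) ^ (2 / (1 - S)),
    mul_pos (rpow_pos_of_pos hn' _) (rpow_pos_of_pos (by linarith) _), fun γ hγ y₁ y₂ => ?_⟩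
  refine le_trans ?_ (two_mul_sum_le hCN hn hγ (norm_nonneg _) (norm_nonneg _) (norm_nonneg _)
    (norm_nonneg _) (norm_nonneg _) (norm_nonneg _) (fun k => by linarith [hδ₂ k])
    (le_ciSup (Finite.bddAbove_range δ₂)) hS)
  gcongr
  calc (N y₁ - N y₂) (y₁ - y₂) ≤ ‖N y₁ - N y₂‖ * ‖y₁ - y₂‖ :=
        (le_norm_self _).trans ((N y₁ - N y₂).le_opNorm _)
    _ ≤ _ := by gcongr; exact hN y₁ y₂

/-- Lemma 3.3: estimate for the nonlinearity satisfying Assumption (N). -/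
theorem stmt1
    {H V : Type*}
    [NormedAddCommGroup H] [InnerProductSpace ℝ H] [CompleteSpace H]
    [NormedAddCommGroup V] [InnerProductSpace ℝ V] [CompleteSpace V]
    (ι : V →L[ℝ] H) (hι : Function.Injective ι) (hdense : DenseRange ι)
    (N : V → (V →L[ℝ] ℝ))
    (CN : ℝ) (hCN : 0 ≤ CN) (n : ℕ) (hn : 1 ≤ n)
    (ζ₁ ζ₂ δ₁ δ₂ : Fin n → ℝ)
    (hζ₁ : ∀ k, 0 ≤ ζ₁ k) (hζ₂ : ∀ k, 0 ≤ ζ₂ k)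
    (hδ₁ : ∀ k, 0 ≤ δ₁ k) (hδ₂ : ∀ k, 0 ≤ δ₂ k)
    (hlt : ∀ k, ζ₂ k + δ₂ k < 1) (hge : ∀ k, 1 ≤ δ₁ k + δ₂ k)
    (hN : ∀ y₁ y₂ : V,
      ‖N y₁ - N y₂‖ ≤ CN * ∑ k : Fin n,
        (‖ι y₁‖ ^ ζ₁ k * ‖y₁‖ ^ ζ₂ k + ‖ι y₂‖ ^ ζ₁ k * ‖y₂‖ ^ ζ₂ k) *
          (‖ι (y₁ - y₂)‖ ^ δ₁ k * ‖y₁ - y₂‖ ^ δ₂ k)) :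
    ∃ Cb : ℝ, 0 < Cb ∧ ∀ γ : ℝ, 0 < γ → ∀ y₁ y₂ : V,
      2 * (N y₁ - N y₂) (y₁ - y₂)
        ≤ γ * ‖y₁ - y₂‖ ^ 2
          + (1 + γ ^ (-(1 + ⨆ k, δ₂ k) / (1 - ⨆ k, δ₂ k))) * Cb *
            ∑ k : Fin n,
              (‖ι y₁‖ ^ (2 * ζ₁ k / (1 - δ₂ k)) * ‖y₁‖ ^ (2 * ζ₂ k / (1 - δ₂ k))
                + ‖ι y₂‖ ^ (2 * ζ₁ k / (1 - δ₂ k)) * ‖y₂‖ ^ (2 * ζ₂ k / (1 - δ₂ k))) *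
              ‖ι (y₁ - y₂)‖ ^ (2 * δ₁ k / (1 - δ₂ k)) :=
  stmt1_general ι N CN hCN n hn ζ₁ ζ₂ δ₁ δ₂ hζ₂ hδ₂ hlt hN
end

section
/- Suppose N : V → V' satisfies Assumption (N) with data (C_N, n, (ζ₁ⱼ), (ζ₂ⱼ), (δ₁ⱼ), (δ₂ⱼ)) and N(0) = 0. Then there exists p > 0 such that for every γ > 0 there exists a constant C ≥ 0 (depending only on γ⁻¹, C_N, n and the exponents) with: 2·⟨N(y), y⟩ ≤ γ·‖y‖_V² + C·(1 + ‖y‖_H^{p})·‖y‖_H² for all y ∈ V. (Lemma 3.5 of the paper.) -/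
/-!
Testing `N y - N 0` against `y`, Assumption (N) bounds `2⟨N y, y⟩` by a finite sum of terms
`‖y‖_H ^ α * ‖y‖_V ^ θ` with `θ < 2 ≤ α + θ`. Young's inequality with exponents `2 / θ` and
`2 / (2 - θ)` turns each of them into `ε ‖y‖_V ^ 2 + C ‖y‖_H ^ q` with `q = 2α / (2 - θ) ≥ 2`, and
`‖y‖_H ^ q ≤ (1 + ‖y‖_H ^ p) ‖y‖_H ^ 2` as soon as `q ≤ p + 2`.
-/

/-- `f a b` can be made smaller than `ε b²` for every `ε > 0` at the price of a multiple of `g a`;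
below `a = ‖y‖_H` and `b = ‖y‖_V`. -/
def Absorbable (f : ℝ → ℝ → ℝ) (g : ℝ → ℝ) : Prop :=
  ∀ ε > 0, ∃ C ≥ 0, ∀ a ≥ 0, ∀ b ≥ 0, f a b ≤ ε * b ^ 2 + C * g a

namespace Absorbable

variable {f f₁ f₂ : ℝ → ℝ → ℝ} {g g' : ℝ → ℝ}

lemma zero : Absorbable 0 g :=
  fun ε hε => ⟨0, le_rfl, fun a _ b _ => by
    simp only [Pi.zero_apply, zero_mul, add_zero]; positivity⟩

lemma add (h₁ : Absorbable f₁ g) (h₂ : Absorbable f₂ g) : Absorbable (f₁ + f₂) g := by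
  intro ε hε
  obtain ⟨C₁, hC₁, h₁⟩ := h₁ (ε / 2) (half_pos hε)
  obtain ⟨C₂, hC₂, h₂⟩ := h₂ (ε / 2) (half_pos hε)
  refine ⟨C₁ + C₂, add_nonneg hC₁ hC₂, fun a ha b hb => ?_⟩
  have := add_le_add (h₁ a ha b hb) (h₂ a ha b hb)
  simp only [Pi.add_apply]
  linarith

lemma sum {ι : Type*} (s : Finset ι) {f : ι → ℝ → ℝ → ℝ} (h : ∀ k ∈ s, Absorbable (f k) g) :
    Absorbable (∑ k ∈ s, f k) g :=
  Finset.sum_induction f (Absorbable · g) (fun _ _ => add) zero h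

lemma mono (h : Absorbable f g) (hf : ∀ a ≥ 0, ∀ b ≥ 0, f₁ a b ≤ f a b)
    (hg : ∀ a ≥ 0, g a ≤ g' a) : Absorbable f₁ g' := by
  intro ε hε
  obtain ⟨C, hC, h⟩ := h ε hε
  refine ⟨C, hC, fun a ha b hb => ?_⟩
  calc f₁ a b ≤ ε * b ^ 2 + C * g a := (hf a ha b hb).trans (h a ha b hb)
    _ ≤ ε * b ^ 2 + C * g' a := by gcongr; exact hg a ha

end Absorbable

lemma absorbable_mul_rpow_mul_rpow {M α θ : ℝ} (hM : 0 ≤ M) (hα : 0 ≤ α) (hθ : 0 ≤ θ)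
    (hθ₂ : θ < 2) :
    Absorbable (fun a b => M * (a ^ α * b ^ θ)) (fun a => a ^ (2 * α / (2 - θ))) := by
  intro ε hε
  have h2θ : 0 < 2 - θ := by linarith
  set r := θ / (2 - θ) with hr
  refine ⟨M * (M / ε) ^ r, by positivity, fun a ha b hb => ?_⟩
  by_cases hab : M * a ^ α ≤ ε * b ^ (2 - θ)
  · have hb2 : b ^ (2 - θ) * b ^ θ = b ^ 2 := by
      rw [← Real.rpow_add_of_nonneg hb h2θ.le hθ, sub_add_cancel, Real.rpow_two]
    calc M * (a ^ α * b ^ θ) = M * a ^ α * b ^ θ := by ring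
      _ ≤ ε * b ^ (2 - θ) * b ^ θ := by gcongr
      _ = ε * b ^ 2 := by rw [mul_assoc, hb2]
      _ ≤ _ := le_add_of_nonneg_right (by positivity)
  · have hbα : b ^ (2 - θ) ≤ M / ε * a ^ α := by
      rw [div_mul_eq_mul_div, le_div_iff₀ hε]
      linarith
    have hbθ : b ^ θ ≤ (M / ε) ^ r * a ^ (α * r) := by
      calc b ^ θ = (b ^ (2 - θ)) ^ r := by
            rw [← Real.rpow_mul hb, hr, mul_div_cancel₀ _ h2θ.ne']
        _ ≤ (M / ε * a ^ α) ^ r := by gcongr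
        _ = (M / ε) ^ r * a ^ (α * r) := by
            rw [Real.mul_rpow (by positivity) (by positivity), Real.rpow_mul ha]
    have hexp : 2 * α / (2 - θ) = α + α * r := by rw [hr]; field_simp; ring
    calc M * (a ^ α * b ^ θ) ≤ M * (a ^ α * ((M / ε) ^ r * a ^ (α * r))) := by gcongr
      _ = M * (M / ε) ^ r * a ^ (2 * α / (2 - θ)) := by
          rw [hexp, Real.rpow_add_of_nonneg ha hα (by positivity)]; ring
      _ ≤ _ := le_add_of_nonneg_left (by positivity)

lemma rpow_le_one_add_rpow {a r p : ℝ} (ha : 0 ≤ a) (hr : 0 ≤ r) (hrp : r ≤ p) :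
    a ^ r ≤ 1 + a ^ p := by
  rcases le_total a 1 with ha₁ | ha₁
  · linarith [Real.rpow_le_one ha ha₁ hr, Real.rpow_nonneg ha p]
  · linarith [Real.rpow_le_rpow_of_exponent_le ha₁ hrp]

lemma rpow_le_one_add_rpow_mul_sq {a q p : ℝ} (ha : 0 ≤ a) (hq : 2 ≤ q) (hqp : q ≤ p + 2) :
    a ^ q ≤ (1 + a ^ p) * a ^ 2 := by
  calc a ^ q = a ^ (q - 2) * a ^ 2 := by
        rw [← Real.rpow_two, ← Real.rpow_add_of_nonneg ha (by linarith) zero_le_two, sub_add_cancel]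
    _ ≤ (1 + a ^ p) * a ^ 2 := by
        gcongr
        exact rpow_le_one_add_rpow ha (by linarith) (by linarith)

lemma absorbable_mul_rpow_mul_rpow_of_le {M α θ p : ℝ} (hM : 0 ≤ M) (hα : 0 ≤ α) (hθ : 0 ≤ θ)
    (hθ₂ : θ < 2) (hαθ : 2 ≤ α + θ) (hp : 2 * α / (2 - θ) ≤ p + 2) :
    Absorbable (fun a b => M * (a ^ α * b ^ θ)) (fun a => (1 + a ^ p) * a ^ 2) := by
  have h2θ : 0 < 2 - θ := by linarith
  have hq : 2 ≤ 2 * α / (2 - θ) := by rw [le_div_iff₀ h2θ]; linarith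
  exact (absorbable_mul_rpow_mul_rpow hM hα hθ hθ₂).mono (fun _ _ _ _ => le_rfl)
    fun a ha => rpow_le_one_add_rpow_mul_sq ha hq hp

lemma exists_absorbable_assumptionN_term {ζ₁ ζ₂ δ₁ δ₂ : ℝ} (hζ₁ : 0 ≤ ζ₁) (hζ₂ : 0 ≤ ζ₂)
    (hδ₁ : 0 ≤ δ₁) (hδ₂ : 0 ≤ δ₂) (hlt : ζ₂ + δ₂ < 1) (hge : 1 ≤ δ₁ + δ₂) :
    ∃ p₀ : ℝ, ∀ p ≥ p₀, ∀ M ≥ 0, Absorbable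
      (fun a b => M * ((a ^ ζ₁ * b ^ ζ₂ + 1) * (a ^ δ₁ * b ^ δ₂) * b))
      (fun a => (1 + a ^ p) * a ^ 2) := by
  refine ⟨max (2 * (ζ₁ + δ₁) / (2 - (ζ₂ + δ₂ + 1)) - 2) (2 * δ₁ / (2 - (δ₂ + 1)) - 2),
    fun p hp M hM => ?_⟩
  have h₁ := absorbable_mul_rpow_mul_rpow_of_le (θ := ζ₂ + δ₂ + 1) (p := p) hM
    (add_nonneg hζ₁ hδ₁) (by positivity) (by linarith) (by linarith)
    (by linarith [le_max_left _ _ |>.trans hp])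
  have h₂ := absorbable_mul_rpow_mul_rpow_of_le (θ := δ₂ + 1) (p := p) hM hδ₁
    (by positivity) (by linarith) (by linarith) (by linarith [le_max_right _ _ |>.trans hp])
  refine (h₁.add h₂).mono (fun a ha b hb => le_of_eq ?_) fun _ _ => le_rfl
  simp only [Pi.add_apply]
  rw [Real.rpow_add_of_nonneg ha hζ₁ hδ₁, Real.rpow_add_of_nonneg hb (by positivity) zero_le_one,
    Real.rpow_add_of_nonneg hb hζ₂ hδ₂, Real.rpow_add_of_nonneg hb hδ₂ zero_le_one, Real.rpow_one]
  ring

lemma norm_le_of_assumptionN {E F G : Type*} [NormedAddCommGroup E] [NormedSpace ℝ E]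
    [NormedAddCommGroup F] [NormedSpace ℝ F] [NormedAddCommGroup G]
    (ι : E →L[ℝ] F) (N : E → G) {CN : ℝ} (hCN : 0 ≤ CN) {n : ℕ} (ζ₁ ζ₂ δ₁ δ₂ : Fin n → ℝ)
    (hN : ∀ y₁ y₂ : E,
      ‖N y₁ - N y₂‖ ≤ CN * ∑ k : Fin n,
        (‖ι y₁‖ ^ ζ₁ k * ‖y₁‖ ^ ζ₂ k + ‖ι y₂‖ ^ ζ₁ k * ‖y₂‖ ^ ζ₂ k) *
          (‖ι (y₁ - y₂)‖ ^ δ₁ k * ‖y₁ - y₂‖ ^ δ₂ k))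
    (hN0 : N 0 = 0) (y : E) :
    ‖N y‖ ≤ CN * ∑ k : Fin n,
      (‖ι y‖ ^ ζ₁ k * ‖y‖ ^ ζ₂ k + 1) * (‖ι y‖ ^ δ₁ k * ‖y‖ ^ δ₂ k) := by
  have h := hN y 0
  simp only [hN0, sub_zero, map_zero, norm_zero] at h
  refine h.trans (mul_le_mul_of_nonneg_left (Finset.sum_le_sum fun k _ => ?_) hCN)
  gcongr
  calc (0 : ℝ) ^ ζ₁ k * (0 : ℝ) ^ ζ₂ k ≤ 1 * 1 := by
        gcongr <;> exact Real.zero_rpow_le_one _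
    _ = 1 := one_mul 1

theorem stmt2_general
    {H V : Type*}
    [NormedAddCommGroup H] [InnerProductSpace ℝ H]
    [NormedAddCommGroup V] [InnerProductSpace ℝ V]
    (ι : V →L[ℝ] H)
    (N : V → (V →L[ℝ] ℝ))
    (CN : ℝ) (hCN : 0 ≤ CN) (n : ℕ)
    (ζ₁ ζ₂ δ₁ δ₂ : Fin n → ℝ)
    (hζ₁ : ∀ k, 0 ≤ ζ₁ k) (hζ₂ : ∀ k, 0 ≤ ζ₂ k)
    (hδ₁ : ∀ k, 0 ≤ δ₁ k) (hδ₂ : ∀ k, 0 ≤ δ₂ k)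
    (hlt : ∀ k, ζ₂ k + δ₂ k < 1) (hge : ∀ k, 1 ≤ δ₁ k + δ₂ k)
    (hN : ∀ y₁ y₂ : V,
      ‖N y₁ - N y₂‖ ≤ CN * ∑ k : Fin n,
        (‖ι y₁‖ ^ ζ₁ k * ‖y₁‖ ^ ζ₂ k + ‖ι y₂‖ ^ ζ₁ k * ‖y₂‖ ^ ζ₂ k) *
          (‖ι (y₁ - y₂)‖ ^ δ₁ k * ‖y₁ - y₂‖ ^ δ₂ k))
    (hN0 : N 0 = 0) :
    ∃ p : ℝ, 0 < p ∧ ∀ γ : ℝ, 0 < γ → ∃ C : ℝ, 0 ≤ C ∧ ∀ y : V,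
      2 * (N y) y ≤ γ * ‖y‖ ^ 2 + C * (1 + ‖ι y‖ ^ p) * ‖ι y‖ ^ 2 := by
  choose p₀ hp₀ using fun k =>
    exists_absorbable_assumptionN_term (hζ₁ k) (hζ₂ k) (hδ₁ k) (hδ₂ k) (hlt k) (hge k)
  obtain ⟨P, hP⟩ := Finite.exists_le p₀
  refine ⟨max P 1, by positivity, fun γ hγ => ?_⟩
  obtain ⟨C, hC, hbound⟩ := Absorbable.sum Finset.univ
    (fun k _ => hp₀ k (max P 1) ((hP k).trans (le_max_left _ _)) (2 * CN) (by positivity))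
    γ hγ
  refine ⟨C, hC, fun y => ?_⟩
  calc 2 * (N y) y ≤ 2 * (‖N y‖ * ‖y‖) := by
        gcongr; exact (le_abs_self _).trans ((N y).le_opNorm y)
    _ ≤ 2 * (CN * (∑ k : Fin n,
          (‖ι y‖ ^ ζ₁ k * ‖y‖ ^ ζ₂ k + 1) * (‖ι y‖ ^ δ₁ k * ‖y‖ ^ δ₂ k)) * ‖y‖) := by
        gcongr
        exact norm_le_of_assumptionN ι N hCN ζ₁ ζ₂ δ₁ δ₂ hN hN0 y
    _ = ∑ k : Fin n, 2 * CN *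
          ((‖ι y‖ ^ ζ₁ k * ‖y‖ ^ ζ₂ k + 1) * (‖ι y‖ ^ δ₁ k * ‖y‖ ^ δ₂ k) * ‖y‖) := by
        simp only [Finset.mul_sum, Finset.sum_mul]
        exact Finset.sum_congr rfl fun k _ => by ring
    _ ≤ γ * ‖y‖ ^ 2 + C * (1 + ‖ι y‖ ^ max P 1) * ‖ι y‖ ^ 2 := by
        simpa only [Finset.sum_apply, mul_assoc]
          using hbound _ (norm_nonneg (ι y)) _ (norm_nonneg y)

/-- Lemma 3.5: one-sided estimate `2⟨N(y), y⟩ ≤ γ‖y‖_V² + C(1+‖y‖_H^p)‖y‖_H²`. -/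
theorem stmt2
    {H V : Type*}
    [NormedAddCommGroup H] [InnerProductSpace ℝ H] [CompleteSpace H]
    [NormedAddCommGroup V] [InnerProductSpace ℝ V] [CompleteSpace V]
    (ι : V →L[ℝ] H) (hι : Function.Injective ι) (hdense : DenseRange ι)
    (N : V → (V →L[ℝ] ℝ))
    (CN : ℝ) (hCN : 0 ≤ CN) (n : ℕ) (hn : 1 ≤ n)
    (ζ₁ ζ₂ δ₁ δ₂ : Fin n → ℝ)
    (hζ₁ : ∀ k, 0 ≤ ζ₁ k) (hζ₂ : ∀ k, 0 ≤ ζ₂ k)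
    (hδ₁ : ∀ k, 0 ≤ δ₁ k) (hδ₂ : ∀ k, 0 ≤ δ₂ k)
    (hlt : ∀ k, ζ₂ k + δ₂ k < 1) (hge : ∀ k, 1 ≤ δ₁ k + δ₂ k)
    (hN : ∀ y₁ y₂ : V,
      ‖N y₁ - N y₂‖ ≤ CN * ∑ k : Fin n,
        (‖ι y₁‖ ^ ζ₁ k * ‖y₁‖ ^ ζ₂ k + ‖ι y₂‖ ^ ζ₁ k * ‖y₂‖ ^ ζ₂ k) *
          (‖ι (y₁ - y₂)‖ ^ δ₁ k * ‖y₁ - y₂‖ ^ δ₂ k))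
    (hN0 : N 0 = 0) :
    ∃ p : ℝ, 0 < p ∧ ∀ γ : ℝ, 0 < γ → ∃ C : ℝ, 0 ≤ C ∧ ∀ y : V,
      2 * (N y) y ≤ γ * ‖y‖ ^ 2 + C * (1 + ‖ι y‖ ^ p) * ‖ι y‖ ^ 2 :=
  stmt2_general ι N CN hCN n ζ₁ ζ₂ δ₁ δ₂ hζ₁ hζ₂ hδ₁ hδ₂ hlt hge hN hN0
end

section
/- For each M ∈ ℕ let U_M ⊆ H be a finite-dimensional subspace and W̃_M ⊆ V a finite-dimensional subspace with dim ι''W̃_M = dim U_M, such that ι''W̃_M and U_M^⊥ are complementary closed subspaces of H, and let Q_M := P_{ι''W̃_M}^{U_M^⊥} be the associated projection. Define the Poincaré-like constant ξ_{M+} := inf { ‖Θ‖_V² / ‖ι Θ‖_H² : Θ ∈ V, Θ ≠ 0, ι Θ ∈ U_M^⊥ } and assume ξ_{M+} → +∞ as M → ∞. Let (Ξ_M) be any sequence of positive real numbers. Then for every ζ > 0 there exist M ∈ ℕ and λ̄ > 0 such that for all y ∈ V: ‖y‖_V² + 2·λ̄·Ξ_M·‖Q_M(ι y)‖_H² ≥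 ζ·‖ι y‖_H². (Lemma 3.6 of the paper.) -/
set_option synthInstance.maxHeartbeats 400000


open scoped RealInnerProductSpace

/-- Lemma 3.6: Poincaré-like lower bound involving the oblique projection. -/
theorem stmt3
    {H V : Type*}
    [NormedAddCommGroup H] [InnerProductSpace ℝ H] [CompleteSpace H]
    [NormedAddCommGroup V] [InnerProductSpace ℝ V] [CompleteSpace V]
    (ι : V →L[ℝ] H) (hι : Function.Injective ι) (hdense : DenseRange ι)
    (U : ℕ → Submodule ℝ H) (Wt : ℕ → Submodule ℝ V)
    (hUfd : ∀ M, FiniteDimensional ℝ (U M))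
    (hWtfd : ∀ M, FiniteDimensional ℝ (Wt M))
    (hdim : ∀ M, Module.finrank ℝ ((Wt M).map ι.toLinearMap) = Module.finrank ℝ (U M))
    (hcompl : ∀ M, IsCompl ((Wt M).map ι.toLinearMap) ((U M)ᗮ))
    (Q : ℕ → (H →L[ℝ] H))
    (hQ : ∀ M x, Q M x ∈ (Wt M).map ι.toLinearMap ∧ x - Q M x ∈ (U M)ᗮ)
    (ξ : ℕ → ℝ)
    (hξdef : ∀ M, ξ M =
      sInf {r : ℝ | ∃ Θ : V, Θ ≠ 0 ∧ ι Θ ∈ (U M)ᗮ ∧ r = ‖Θ‖ ^ 2 / ‖ι Θ‖ ^ 2})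
    (hξ : Filter.Tendsto ξ Filter.atTop Filter.atTop)
    (Ξ : ℕ → ℝ) (hΞ : ∀ M, 0 < Ξ M) :
    ∀ ζ : ℝ, 0 < ζ → ∃ M : ℕ, ∃ lam : ℝ, 0 < lam ∧ ∀ y : V,
      ζ * ‖ι y‖ ^ 2 ≤ ‖y‖ ^ 2 + 2 * lam * Ξ M * ‖Q M (ι y)‖ ^ 2 := by
  intro ζ hζ
  obtain ⟨M, hM⟩ := (hξ.eventually_ge_atTop (4 * ζ)).exists
  have hξpos : 0 < ξ M := lt_of_lt_of_le (by linarith) hM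
  haveI := hWtfd M
  -- constant c with ‖w‖ ≤ c * ‖ι w‖ on Wt M
  have hc : ∃ c : ℝ, 0 ≤ c ∧ ∀ w : V, w ∈ Wt M → ‖w‖ ≤ c * ‖ι w‖ := by
    set f : (Wt M) →ₗ[ℝ] H := ι.toLinearMap.comp (Wt M).subtype with hf
    have hfinj : Function.Injective f := by
      intro a b hab
      exact Subtype.ext (hι hab)
    let e := LinearEquiv.ofInjective f hfinj
    haveI : FiniteDimensional ℝ (LinearMap.range f) := e.finiteDimensional
    let g := LinearMap.toContinuousLinearMap e.symm.toLinearMap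
    refine ⟨‖g‖, g.opNorm_nonneg, fun w hw => ?_⟩
    have h1 : g (e ⟨w, hw⟩) = ⟨w, hw⟩ := e.symm_apply_apply _
    have h2 : ‖g (e ⟨w, hw⟩)‖ ≤ ‖g‖ * ‖e ⟨w, hw⟩‖ := g.le_opNorm _
    have h3 : ‖(e ⟨w, hw⟩ : H)‖ = ‖ι w‖ := by
      have : ((e ⟨w, hw⟩ : LinearMap.range f) : H) = f ⟨w, hw⟩ :=
        LinearEquiv.ofInjective_apply f ⟨w, hw⟩
      rw [show ‖(e ⟨w, hw⟩ : H)‖ = ‖((e ⟨w, hw⟩ : LinearMap.range f) : H)‖ from rfl, this]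
      rfl
    rw [h1] at h2
    have : ‖(⟨w, hw⟩ : Wt M)‖ = ‖w‖ := rfl
    rw [this] at h2
    calc ‖w‖ ≤ ‖g‖ * ‖(e ⟨w, hw⟩ : H)‖ := h2
    _ = ‖g‖ * ‖ι w‖ := by rw [h3]
  obtain ⟨c, hc0, hc⟩ := hc
  -- key ξ inequality
  have key : ∀ Θ : V, ι Θ ∈ (U M)ᗮ → ξ M * ‖ι Θ‖ ^ 2 ≤ ‖Θ‖ ^ 2 := by
    intro Θ hΘ
    rcases eq_or_ne Θ 0 with rfl | hΘ0
    · simp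
    have hιΘ : ι Θ ≠ 0 := fun h => hΘ0 (hι (by simpa using h))
    have hpos : (0:ℝ) < ‖ι Θ‖ ^ 2 := pow_pos (norm_pos_iff.mpr hιΘ) 2
    have hmem : ‖Θ‖ ^ 2 / ‖ι Θ‖ ^ 2 ∈
        {r : ℝ | ∃ Θ' : V, Θ' ≠ 0 ∧ ι Θ' ∈ (U M)ᗮ ∧ r = ‖Θ'‖ ^ 2 / ‖ι Θ'‖ ^ 2} :=
      ⟨Θ, hΘ0, hΘ, rfl⟩
    have hbdd : BddBelow {r : ℝ | ∃ Θ' : V, Θ' ≠ 0 ∧ ι Θ' ∈ (U M)ᗮ ∧ r = ‖Θ'‖ ^ 2 / ‖ι Θ'‖ ^ 2} := by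
      refine ⟨0, fun r hr => ?_⟩
      obtain ⟨Θ', -, -, rfl⟩ := hr
      positivity
    have := csInf_le hbdd hmem
    rw [← hξdef M] at this
    calc ξ M * ‖ι Θ‖ ^ 2 ≤ (‖Θ‖ ^ 2 / ‖ι Θ‖ ^ 2) * ‖ι Θ‖ ^ 2 := by
          exact mul_le_mul_of_nonneg_right this hpos.le
    _ = ‖Θ‖ ^ 2 := div_mul_cancel₀ _ hpos.ne'
  set lam := max 1 ((c ^ 2 + 2 * ζ) / (2 * Ξ M)) with hlam
  have hlam1 : (1:ℝ) ≤ lam := le_max_left _ _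
  refine ⟨M, lam, lt_of_lt_of_le one_pos hlam1, fun y => ?_⟩
  have hK : c ^ 2 + 2 * ζ ≤ 2 * lam * Ξ M := by
    have h1 : (c ^ 2 + 2 * ζ) / (2 * Ξ M) ≤ lam := le_max_right _ _
    have h2 : (0:ℝ) < 2 * Ξ M := by have := hΞ M; linarith
    calc c ^ 2 + 2 * ζ = ((c ^ 2 + 2 * ζ) / (2 * Ξ M)) * (2 * Ξ M) :=
          (div_mul_cancel₀ _ h2.ne').symm
    _ ≤ lam * (2 * Ξ M) := mul_le_mul_of_nonneg_right h1 h2.le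
    _ = 2 * lam * Ξ M := by ring
  obtain ⟨hQmem, hQperp⟩ := hQ M (ι y)
  obtain ⟨w, hw, hιw⟩ := hQmem
  simp only [ContinuousLinearMap.coe_coe] at hιw
  set A := ‖y‖
  set B := ‖Q M (ι y)‖
  set D := ‖ι y - Q M (ι y)‖
  have hA : 0 ≤ A := norm_nonneg _
  have hB : 0 ≤ B := norm_nonneg _
  have hD : 0 ≤ D := norm_nonneg _
  have hkey : ξ M * D ^ 2 ≤ ‖y - w‖ ^ 2 := by
    have : ι (y - w) ∈ (U M)ᗮ := by
      rw [map_sub, hιw]; exact hQperp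
    have h := key (y - w) this
    rwa [map_sub, hιw] at h
  have hyw : ‖y - w‖ ≤ A + c * B := by
    calc ‖y - w‖ ≤ ‖y‖ + ‖w‖ := norm_sub_le _ _
    _ ≤ A + c * B := by
        have := hc w hw
        rw [hιw] at this
        linarith
  have hyw2 : ‖y - w‖ ^ 2 ≤ (A + c * B) ^ 2 := by
    apply pow_le_pow_left₀ (norm_nonneg _) hyw
  have hD2 : ξ M * D ^ 2 ≤ (A + c * B) ^ 2 := le_trans hkey hyw2
  have hιy : ‖ι y‖ ≤ D + B := by
    calc ‖ι y‖ = ‖(ι y - Q M (ι y)) + Q M (ι y)‖ := by rw [sub_add_cancel]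
    _ ≤ D + B := norm_add_le _ _
  have hιy2 : ‖ι y‖ ^ 2 ≤ (D + B) ^ 2 := pow_le_pow_left₀ (norm_nonneg _) hιy 2
  nlinarith [sq_nonneg (A - c * B), sq_nonneg (D - B), sq_nonneg A, sq_nonneg B, sq_nonneg D,
    mul_nonneg hA hB, mul_nonneg (mul_nonneg hc0 hA) hB, hΞ M,
    mul_le_mul_of_nonneg_left hK (le_of_lt hξpos),
    mul_le_mul_of_nonneg_right hM (sq_nonneg B),
    mul_le_mul_of_nonneg_right hM (sq_nonneg A),
    mul_le_mul_of_nonneg_left hιy2 hζ.le]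
end

section
/- Let W̃ ⊆ V be a finite-dimensional subspace and let Q : H → H be a continuous linear map whose range is contained in ι''W̃. Then there exists a continuous linear map Q_V : V → V such that ι(Q_V φ) = Q(ι φ) for all φ ∈ V; moreover, there exists a constant C > 0 (depending only on W̃) with ‖Q_V‖_{L(V)} ≤ C·‖Q‖_{L(H)}·‖ι‖_{L(V,H)}. (Lemma 3.8 of the paper: the oblique projection onto a finite-dimensional subspace of V restricts to a bounded operator on V.) -/
open scoped RealInnerProductSpace

/-- Lemma 3.8: a continuous linear map on `H` with range in the image of a
finite-dimensional subspace of `V` restricts to a bounded operator on `V`. -/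
theorem stmt5
    {H V : Type*}
    [NormedAddCommGroup H] [InnerProductSpace ℝ H] [CompleteSpace H]
    [NormedAddCommGroup V] [InnerProductSpace ℝ V] [CompleteSpace V]
    (ι : V →L[ℝ] H) (hι : Function.Injective ι) (hdense : DenseRange ι)
    (Wt : Submodule ℝ V) [FiniteDimensional ℝ Wt] :
    ∃ C : ℝ, 0 < C ∧ ∀ Q : H →L[ℝ] H,
      (∀ x : H, Q x ∈ Wt.map ι.toLinearMap) →
      ∃ QV : V →L[ℝ] V,
        (∀ φ : V, ι (QV φ) = Q (ι φ)) ∧ ‖QV‖ ≤ C * ‖Q‖ * ‖ι‖ := by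
  classical
  set W' := Wt.map ι.toLinearMap with hW'
  let e : Wt ≃ₗ[ℝ] W' := Submodule.equivMapOfInjective ι.toLinearMap hι Wt
  haveI : FiniteDimensional ℝ W' := e.finiteDimensional
  let g : W' →ₗ[ℝ] V := Wt.subtype ∘ₗ e.symm.toLinearMap
  let g2 : W' →L[ℝ] V := LinearMap.toContinuousLinearMap g
  have hg2 : ∀ y : W', ι (g2 y) = (y : H) := by
    intro y
    have h1 : ((e (e.symm y) : W') : H) = ι ((e.symm y : Wt) : V) :=
      Submodule.coe_equivMapOfInjective_apply ι.toLinearMap hι Wt (e.symm y)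
    rw [e.apply_symm_apply] at h1
    exact h1.symm
  refine ⟨‖g2‖ + 1, by positivity, fun Q hQ => ?_⟩
  let f : V →L[ℝ] W' := (Q.comp ι).codRestrict W' (fun x => hQ (ι x))
  refine ⟨g2.comp f, fun φ => hg2 (f φ), ?_⟩
  have hf : ‖f‖ ≤ ‖Q‖ * ‖ι‖ := by
    refine ContinuousLinearMap.opNorm_le_bound _ (by positivity) fun x => ?_
    have : ‖f x‖ = ‖Q (ι x)‖ := rfl
    rw [this]
    calc ‖Q (ι x)‖ ≤ ‖Q‖ * ‖ι x‖ := Q.le_opNorm _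
      _ ≤ ‖Q‖ * (‖ι‖ * ‖x‖) := by
          gcongr
          exact ι.le_opNorm x
      _ = ‖Q‖ * ‖ι‖ * ‖x‖ := by ring
  calc ‖g2.comp f‖ ≤ ‖g2‖ * ‖f‖ := ContinuousLinearMap.opNorm_comp_le _ _
    _ ≤ ‖g2‖ * (‖Q‖ * ‖ι‖) := by gcongr
    _ ≤ (‖g2‖ + 1) * ‖Q‖ * ‖ι‖ := by
        have h1 : (0:ℝ) ≤ ‖Q‖ * ‖ι‖ := by positivity
        nlinarith [norm_nonneg g2]
end

section
/- Let W, W̃ ⊆ V be finite-dimensional subspaces such that, in H, the subspaces ι''W and (ι''W̃)^⊥ are complementary and the subspaces ι''W̃ and (ι''W)^⊥ are complementary. Let P := P_{ι''W}^{(ι''W̃)^⊥} and Q := P_{ι''W̃}^{(ι''W)^⊥}, and let Q_V : V → V be the continuous linear map with ι ∘ Q_V = Q ∘ ι (which exists since ι''W̃ is a finite-dimensional subspace of ι''V). Then there exists a continuous linear map P̂ : V' → V' such that P̂(j(g)) = j(P g) for all g ∈ H, and ‖P̂‖_{L(V')} ≤ ‖Q_V‖_{L(V)}; explicitly one may take ⟨P̂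 f, φ⟩ = ⟨f, Q_V φ⟩ for all f ∈ V', φ ∈ V. (Lemma 3.9 of the paper: the oblique projection extends to a bounded operator on V'.) -/
open scoped RealInnerProductSpace

/-- Lemma 3.9: the oblique projection extends to a bounded operator on `V'`. -/
theorem stmt6
    {H V : Type*}
    [NormedAddCommGroup H] [InnerProductSpace ℝ H] [CompleteSpace H]
    [NormedAddCommGroup V] [InnerProductSpace ℝ V] [CompleteSpace V]
    (ι : V →L[ℝ] H) (hι : Function.Injective ι) (hdense : DenseRange ι)
    (j : H →L[ℝ] (V →L[ℝ] ℝ)) (hj : ∀ (h : H) (φ : V), j h φ = ⟪h, ι φ⟫)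
    (W Wt : Submodule ℝ V) [FiniteDimensional ℝ W] [FiniteDimensional ℝ Wt]
    (hcompl₁ : IsCompl (W.map ι.toLinearMap) ((Wt.map ι.toLinearMap)ᗮ))
    (hcompl₂ : IsCompl (Wt.map ι.toLinearMap) ((W.map ι.toLinearMap)ᗮ))
    (P Q : H →L[ℝ] H)
    (hP : ∀ x : H, P x ∈ W.map ι.toLinearMap ∧ x - P x ∈ (Wt.map ι.toLinearMap)ᗮ)
    (hQ : ∀ x : H, Q x ∈ Wt.map ι.toLinearMap ∧ x - Q x ∈ (W.map ι.toLinearMap)ᗮ)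
    (QV : V →L[ℝ] V) (hQV : ∀ φ : V, ι (QV φ) = Q (ι φ)) :
    ∃ Phat : (V →L[ℝ] ℝ) →L[ℝ] (V →L[ℝ] ℝ),
      (∀ g : H, Phat (j g) = j (P g)) ∧ ‖Phat‖ ≤ ‖QV‖ ∧
        ∀ (f : V →L[ℝ] ℝ) (φ : V), Phat f φ = f (QV φ) := by
  refine ⟨(ContinuousLinearMap.compL ℝ V V ℝ).flip QV, ?_, ?_, ?_⟩
  · intro g
    ext φ
    simp only [ContinuousLinearMap.flip_apply, ContinuousLinearMap.compL_apply,
      ContinuousLinearMap.coe_comp', Function.comp_apply]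
    rw [hj, hj, hQV]
    have h1 : ⟪P g, ι φ - Q (ι φ)⟫ = 0 :=
      (Submodule.mem_orthogonal _ _).1 (hQ (ι φ)).2 _ (hP g).1
    have h2 : ⟪g - P g, Q (ι φ)⟫ = 0 := by
      have := (Submodule.mem_orthogonal' _ _).1 (hP g).2 _ (hQ (ι φ)).1
      exact this
    have e1 : ⟪g, Q (ι φ)⟫ = ⟪P g, Q (ι φ)⟫ := by
      have := inner_sub_left (𝕜 := ℝ) g (P g) (Q (ι φ))
      linarith [h2, this]
    have e2 : ⟪P g, ι φ⟫ = ⟪P g, Q (ι φ)⟫ := by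
      have := inner_sub_right (𝕜 := ℝ) (P g) (ι φ) (Q (ι φ))
      linarith [h1, this]
    rw [e1, e2]
  · refine ContinuousLinearMap.opNorm_le_bound _ (norm_nonneg QV) fun f => ?_
    calc ‖f.comp QV‖ ≤ ‖f‖ * ‖QV‖ := ContinuousLinearMap.opNorm_comp_le _ _
    _ = ‖QV‖ * ‖f‖ := mul_comm _ _
  · intro f φ
    rfl
end

section
/- Let U and Ũ be closed subspaces of a real Hilbert space H such that U and Ũ^⊥ are complementary and Ũ and U^⊥ are complementary; let P := P_U^{Ũ^⊥} and Q := P_{Ũ}^{U^⊥}, and let λ ≥ 0. Then for every p ∈ U: (−λ·P(Q p), p)_H = −λ·‖Q p‖_H² ≤ −λ·‖p‖_H². In particular the operator 𝒦 : U → U, 𝒦(p) = −λ·P(Q p), satisfies the monotonicity condition (𝒦(p), p)_H ≤ −λ·‖p‖_H² for all p ∈ U. (Monotonicity of the explicit oblique-projection feedback 𝒦_M^{λ,0}, shown in the Introduction.) -/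
open scoped RealInnerProductSpace

/-- Monotonicity of the explicit oblique-projection feedback `𝒦(p) = -λ P (Q p)`. -/
theorem stmt9
    {H : Type*} [NormedAddCommGroup H] [InnerProductSpace ℝ H] [CompleteSpace H]
    (U Ut : Submodule ℝ H)
    (hUc : IsClosed (U : Set H)) (hUtc : IsClosed (Ut : Set H))
    (hcompl₁ : IsCompl U Utᗮ) (hcompl₂ : IsCompl Ut Uᗮ)
    (P Q : H →L[ℝ] H)
    (hP : ∀ x : H, P x ∈ U ∧ x - P x ∈ Utᗮ)
    (hQ : ∀ x : H, Q x ∈ Ut ∧ x - Q x ∈ Uᗮ)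
    (lam : ℝ) (hlam : 0 ≤ lam) :
    ∀ p ∈ U,
      ⟪-lam • P (Q p), p⟫ = -lam * ‖Q p‖ ^ 2 ∧
        -lam * ‖Q p‖ ^ 2 ≤ -lam * ‖p‖ ^ 2 := by
  intro p hp
  obtain ⟨hPQmem, hPQker⟩ := hP (Q p)
  obtain ⟨hQmem, hQker⟩ := hQ p
  -- ⟪P (Q p), p - Q p⟫ = 0 since P (Q p) ∈ U, p - Q p ∈ Uᗮ
  have h1 : ⟪P (Q p), p - Q p⟫ = 0 :=
    Submodule.mem_orthogonal U (p - Q p) |>.mp hQker _ hPQmem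
  -- ⟪Q p, Q p - P (Q p)⟫ = 0 since Q p ∈ Ut, Q p - P (Q p) ∈ Utᗮ
  have h2 : ⟪Q p, Q p - P (Q p)⟫ = 0 :=
    Submodule.mem_orthogonal Ut (Q p - P (Q p)) |>.mp hPQker _ hQmem
  -- ⟪p, p - Q p⟫ = 0 since p ∈ U
  have h3 : ⟪p, p - Q p⟫ = 0 :=
    Submodule.mem_orthogonal U (p - Q p) |>.mp hQker _ hp
  have key : ⟪P (Q p), p⟫ = ‖Q p‖ ^ 2 := by
    have e1 : ⟪P (Q p), p⟫ = ⟪P (Q p), Q p⟫ := by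
      have := inner_sub_right (𝕜 := ℝ) (P (Q p)) p (Q p)
      linarith [this, h1]
    have e2 : ⟪Q p, Q p⟫ - ⟪Q p, P (Q p)⟫ = 0 := by
      have := inner_sub_right (𝕜 := ℝ) (Q p) (Q p) (P (Q p))
      linarith [this, h2]
    rw [e1, real_inner_comm]
    have := real_inner_self_eq_norm_sq (Q p)
    linarith
  constructor
  · rw [inner_smul_left, key]
    simp [RCLike.conj_to_real]
  · have hpq : ⟪p, Q p⟫ = ‖p‖ ^ 2 := by
      have := inner_sub_right (𝕜 := ℝ) p p (Q p)
      have hn := real_inner_self_eq_norm_sq p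
      linarith
    have hcs : ⟪p, Q p⟫ ≤ ‖p‖ * ‖Q p‖ := real_inner_le_norm p (Q p)
    have hle : ‖p‖ ≤ ‖Q p‖ := by
      rcases eq_or_lt_of_le (norm_nonneg p) with h0 | h0
      · rw [← h0]; exact norm_nonneg _
      · nlinarith [hpq, hcs]
    nlinarith [mul_self_le_mul_self (norm_nonneg p) hle, hlam]
end

section
/- Assume the Gelfand-triple setting, A : V → V' continuous linear, symmetric, with ⟨A u, u⟩ = ‖u‖_V² for all u ∈ V; A_rc(t)(v) := B₁(t)(ι v) + j(B₂(t) v) with ‖B₁(t)‖ ≤ C_rc and ‖B₂(t)‖ ≤ C_rc for all t ≥ 0; for each t ≥ 0, N(t, ·) : V → V' satisfies Assumption (N) with t-independent data and N(t,0) = 0. For each M ∈ ℕ let W_M, W̃_M ⊆ V be finite-dimensional subspaces with dim W_M = dim W̃_M, U_M := ι''W_M, Ũ_M := ι''W̃_M, such that in H the subspaces U_M and Ũ_M^⊥ are complementary and Ũ_M and U_M^⊥ are complementary; let P_M := P_{U_M}^{Ũ_M^⊥} and Q_M := P_{Ũ_M}^{U_M^⊥}, and assume the Poincaré constants ξ_{M+}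 := inf { ‖Θ‖_V² / ‖ι Θ‖_H² : Θ ∈ V, Θ ≠ 0, ι Θ ∈ U_M^⊥ } satisfy ξ_{M+} → +∞. Then for every R > 0 and μ > 0 there exist M ∈ ℕ and λ₀ > 0 such that for every λ ≥ λ₀ and every continuous curve y : [0,∞) → V with ‖ι y(0)‖_H < R such that z(t) := j(ι y(t)) is differentiable in V' at every t with z'(t) = −A(y(t)) − A_rc(t)(y(t)) − N(t, y(t)) − λ·j(P_M(Q_M(ι y(t)))), one has ‖ι y(t)‖_H ≤ e^{−μ(t−s)}·‖ι y(s)‖_H for all t ≥ s ≥ 0. (Corollary 3.11, case ρ = 0: stabilization by the explicit oblique-projection feedback −λ P_{U_M}^{Ũ_M^⊥} P_{Ũ_M}^{U_M^⊥} y.) -/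
open scoped RealInnerProductSpace

lemma young' (R₁ ε a b : ℝ) (hR : 1 ≤ R₁) (hε : 0 < ε) (hb1 : 1 ≤ b) (hb2 : b < 2)
    (hab : 2 - b ≤ a) :
    ∃ C : ℝ, 0 ≤ C ∧ ∀ x y : ℝ, 0 ≤ x → x ≤ R₁ → 0 ≤ y →
      x ^ a * y ^ b ≤ ε * y ^ (2:ℝ) + C * x ^ (2:ℝ) := by
  have hθ : 0 < 2 - b := by linarith
  have ha : 0 < a := lt_of_lt_of_le hθ hab
  set C : ℝ := (ε ^ (-(b/2)) * R₁ ^ (a - (2-b))) ^ (2/(2-b)) with hC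
  have hCpos : 0 < C := by
    apply Real.rpow_pos_of_pos
    exact mul_pos (Real.rpow_pos_of_pos hε _) (Real.rpow_pos_of_pos (by linarith) _)
  refine ⟨C, hCpos.le, fun x y hx hxR hy => ?_⟩
  rcases eq_or_lt_of_le hx with hx0 | hx0
  · rw [← hx0, Real.zero_rpow (ne_of_gt ha), Real.zero_rpow (by norm_num : (2:ℝ) ≠ 0)]
    simp only [zero_mul, mul_zero, add_zero]
    positivity
  rcases eq_or_lt_of_le hy with hy0 | hy0
  · rw [← hy0, Real.zero_rpow (by linarith : b ≠ 0)]
    simp only [mul_zero]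
    positivity
  -- now x, y > 0
  have key : x ^ a * y ^ b ≤ (ε * y ^ (2:ℝ)) ^ (b/2) * (C * x ^ (2:ℝ)) ^ ((2-b)/2) := by
    have h1 : (ε * y ^ (2:ℝ)) ^ (b/2) = ε ^ (b/2) * y ^ b := by
      rw [Real.mul_rpow hε.le (by positivity), ← Real.rpow_mul hy]
      ring_nf
    have h2 : (C * x ^ (2:ℝ)) ^ ((2-b)/2) = C ^ ((2-b)/2) * x ^ (2-b) := by
      rw [Real.mul_rpow hCpos.le (by positivity), ← Real.rpow_mul hx]
      ring_nf
    rw [h1, h2]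
    have hCe : C ^ ((2-b)/2) = ε ^ (-(b/2)) * R₁ ^ (a - (2-b)) := by
      rw [hC, ← Real.rpow_mul (by positivity)]
      rw [show (2 / (2-b)) * ((2-b)/2) = 1 by field_simp]
      exact Real.rpow_one _
    rw [hCe]
    have hxa : x ^ a = x ^ (a - (2-b)) * x ^ (2-b) := by
      rw [← Real.rpow_add hx0]; ring_nf
    rw [hxa]
    have hxR' : x ^ (a - (2-b)) ≤ R₁ ^ (a - (2-b)) :=
      Real.rpow_le_rpow hx hxR (by linarith)
    have hee : (1:ℝ) ≤ ε ^ (b/2) * ε ^ (-(b/2)) := by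
      rw [← Real.rpow_add hε]; simp
    calc x ^ (a - (2-b)) * x ^ (2-b) * y ^ b
        ≤ R₁ ^ (a - (2-b)) * x ^ (2-b) * y ^ b := by
          apply mul_le_mul_of_nonneg_right (mul_le_mul_of_nonneg_right hxR' (by positivity)) (by positivity)
      _ ≤ (ε ^ (b/2) * ε ^ (-(b/2))) * (R₁ ^ (a - (2-b)) * x ^ (2-b) * y ^ b) := by
          nlinarith [Real.rpow_nonneg (le_of_lt hx0 : (0:ℝ) ≤ x) (2-b), Real.rpow_nonneg hy b,
            Real.rpow_nonneg (by linarith : (0:ℝ) ≤ R₁) (a - (2-b)),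
            mul_nonneg (mul_nonneg (Real.rpow_nonneg (by linarith : (0:ℝ) ≤ R₁) (a-(2-b))) (Real.rpow_nonneg (le_of_lt hx0) (2-b))) (Real.rpow_nonneg hy b)]
      _ = ε ^ (b/2) * y ^ b * (ε ^ (-(b/2)) * R₁ ^ (a - (2-b)) * x ^ (2-b)) := by ring
  calc x ^ a * y ^ b ≤ (ε * y ^ (2:ℝ)) ^ (b/2) * (C * x ^ (2:ℝ)) ^ ((2-b)/2) := key
    _ ≤ (b/2) * (ε * y ^ (2:ℝ)) + ((2-b)/2) * (C * x ^ (2:ℝ)) := by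
        apply Real.geom_mean_le_arith_mean2_weighted (by linarith) (by linarith)
          (by positivity) (by positivity) (by ring)
    _ ≤ ε * y ^ (2:ℝ) + C * x ^ (2:ℝ) := by
        have h1 : 0 ≤ ε * y ^ (2:ℝ) := by positivity
        have h2 : 0 ≤ C * x ^ (2:ℝ) := by positivity
        nlinarith

lemma findim_bound {V H : Type*} [NormedAddCommGroup V] [InnerProductSpace ℝ V]
    [NormedAddCommGroup H] [InnerProductSpace ℝ H]
    (ι : V →L[ℝ] H) (hι : Function.Injective ι)
    (S : Submodule ℝ V) (hS : FiniteDimensional ℝ S) :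
    ∃ c : ℝ, 0 < c ∧ ∀ w ∈ S, ‖w‖ ≤ c * ‖ι w‖ := by
  set f : S →ₗ[ℝ] H := ι.toLinearMap.comp S.subtype with hf
  have finj : Function.Injective f := by
    intro a b hab
    exact Subtype.ext (hι hab)
  have : FiniteDimensional ℝ (LinearMap.range f) := inferInstance
  set e := LinearEquiv.ofInjective f finj with he
  set g := LinearMap.toContinuousLinearMap e.symm.toLinearMap with hg
  refine ⟨max 1 ‖g‖, lt_of_lt_of_le one_pos (le_max_left _ _), fun w hw => ?_⟩
  have h1 : ‖(⟨w, hw⟩ : S)‖ = ‖w‖ := rfl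
  have h2 : e.symm (e ⟨w, hw⟩) = ⟨w, hw⟩ := e.symm_apply_apply _
  have h3 : ‖e ⟨w, hw⟩‖ = ‖ι w‖ := by
    have : ((e ⟨w, hw⟩ : LinearMap.range f) : H) = f ⟨w, hw⟩ := rfl
    rw [← Submodule.norm_coe (e ⟨w, hw⟩ : LinearMap.range f)] at *
    rw [this]
    rfl
  calc ‖w‖ = ‖(e.symm (e ⟨w, hw⟩) : S)‖ := by rw [h2, ← h1]
    _ = ‖g (e ⟨w, hw⟩)‖ := rfl
    _ ≤ ‖g‖ * ‖e ⟨w, hw⟩‖ := g.le_opNorm _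
    _ ≤ max 1 ‖g‖ * ‖ι w‖ := by
        rw [h3]
        exact mul_le_mul_of_nonneg_right (le_max_right _ _) (norm_nonneg _)


lemma sq_add_le' (a b cc : ℝ) (ha : 0 ≤ a) (hb : 0 ≤ b) (hc : 0 ≤ cc) (h : cc ≤ a + b) :
    cc ^ 2 ≤ 2 * a ^ 2 + 2 * b ^ 2 := by nlinarith [sq_nonneg (a - b)]

lemma arc_bound' (C x Y a : ℝ) (h : a ≤ 2 * C * x * Y) :
    a ≤ (1/4) * Y ^ 2 + 4 * C ^ 2 * x ^ 2 := by nlinarith [sq_nonneg (Y/2 - 2*C*x)]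

lemma eps_bound' (a ε : ℝ) (ha : 0 ≤ a) (hε : 0 < ε) (h : ε * (8 * a + 8) = 1) :
    a * (2 * ε) ≤ 1/4 := by nlinarith

lemma deriv_sq_norm {H V : Type*}
    [NormedAddCommGroup H] [InnerProductSpace ℝ H]
    [NormedAddCommGroup V] [InnerProductSpace ℝ V]
    (ι : V →L[ℝ] H) (j : H →L[ℝ] (V →L[ℝ] ℝ))
    (hj : ∀ (h : H) (φ : V), j h φ = ⟪h, ι φ⟫)
    (y : ℝ → V) (hy : ContinuousOn y (Set.Ici 0))
    (D : V →L[ℝ] ℝ) (t : ℝ) (ht : t ∈ Set.Ici (0:ℝ))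
    (hz : HasDerivWithinAt (fun s : ℝ => j (ι (y s))) D (Set.Ici 0) t) :
    HasDerivWithinAt (fun s : ℝ => ‖ι (y s)‖ ^ 2) (2 * D (y t)) (Set.Ici 0) t := by
  set z : ℝ → (V →L[ℝ] ℝ) := fun s => j (ι (y s)) with hzdef
  have key : ∀ t' : ℝ, slope (fun s => ‖ι (y s)‖ ^ 2) t t'
      = (slope z t t') (y t' + y t) := by
    intro t'
    have hid : ‖ι (y t')‖ ^ 2 - ‖ι (y t)‖ ^ 2 = (z t' - z t) (y t' + y t) := by
      simp only [hzdef, ContinuousLinearMap.sub_apply, map_add, hj]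
      rw [← real_inner_self_eq_norm_sq, ← real_inner_self_eq_norm_sq,
        real_inner_comm (ι (y t)) (ι (y t'))]
      ring
    simp only [slope_def_field, slope, vsub_eq_sub]
    rw [hid]
    simp [ContinuousLinearMap.smul_apply]
  rw [hasDerivWithinAt_iff_tendsto_slope]
  have hlim : Filter.Tendsto (fun t' => ((slope z t t' : V →L[ℝ] ℝ), y t' + y t))
      (nhdsWithin t (Set.Ici 0 \ {t})) (nhds (D, y t + y t)) := by
    apply Filter.Tendsto.prodMk_nhds
    · exact hasDerivWithinAt_iff_tendsto_slope.mp hz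
    · have hyc : Filter.Tendsto y (nhdsWithin t (Set.Ici 0 \ {t})) (nhds (y t)) :=
        (hy t ht).mono_left (nhdsWithin_mono t Set.diff_subset)
      exact hyc.add tendsto_const_nhds
  have heval : Filter.Tendsto (fun p : (V →L[ℝ] ℝ) × V => p.1 p.2)
      (nhds (D, y t + y t)) (nhds (D (y t + y t))) :=
    (isBoundedBilinearMap_apply.continuous).continuousAt
  have := heval.comp hlim
  have h2 : D (y t + y t) = 2 * D (y t) := by
    rw [map_add]; ring
  rw [h2] at this
  refine this.congr (fun t' => ?_)
  exact (key t').symm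

set_option maxHeartbeats 1000000 in
/-- Corollary 3.11 (case ρ = 0): semiglobal exponential stabilization by the explicit
oblique-projection feedback `-λ P_{U_M}^{Ũ_M^⊥} P_{Ũ_M}^{U_M^⊥} y`. -/
theorem stmt12
    {H V : Type*}
    [NormedAddCommGroup H] [InnerProductSpace ℝ H] [CompleteSpace H]
    [NormedAddCommGroup V] [InnerProductSpace ℝ V] [CompleteSpace V]
    (ι : V →L[ℝ] H) (hι : Function.Injective ι) (hdense : DenseRange ι)
    (j : H →L[ℝ] (V →L[ℝ] ℝ)) (hj : ∀ (h : H) (φ : V), j h φ = ⟪h, ι φ⟫)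
    (A : V →L[ℝ] (V →L[ℝ] ℝ))
    (hAsym : ∀ u v : V, A u v = A v u)
    (hAcoer : ∀ u : V, A u u = ‖u‖ ^ 2)
    (Crc : ℝ) (hCrc : 0 ≤ Crc)
    (B₁ : ℝ → (H →L[ℝ] (V →L[ℝ] ℝ))) (B₂ : ℝ → (V →L[ℝ] H))
    (hB₁ : ∀ t : ℝ, 0 ≤ t → ‖B₁ t‖ ≤ Crc) (hB₂ : ∀ t : ℝ, 0 ≤ t → ‖B₂ t‖ ≤ Crc)
    (Arc : ℝ → V → (V →L[ℝ] ℝ))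
    (hArc : ∀ (t : ℝ) (v : V), Arc t v = B₁ t (ι v) + j (B₂ t v))
    (N : ℝ → V → (V →L[ℝ] ℝ))
    (CN : ℝ) (hCN : 0 ≤ CN) (n : ℕ) (hn : 1 ≤ n)
    (ζ₁ ζ₂ δ₁ δ₂ : Fin n → ℝ)
    (hζ₁ : ∀ k, 0 ≤ ζ₁ k) (hζ₂ : ∀ k, 0 ≤ ζ₂ k)
    (hδ₁ : ∀ k, 0 ≤ δ₁ k) (hδ₂ : ∀ k, 0 ≤ δ₂ k)
    (hlt : ∀ k, ζ₂ k + δ₂ k < 1) (hge : ∀ k, 1 ≤ δ₁ k + δ₂ k)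
    (hN : ∀ t : ℝ, 0 ≤ t → ∀ y₁ y₂ : V,
      ‖N t y₁ - N t y₂‖ ≤ CN * ∑ k : Fin n,
        (‖ι y₁‖ ^ ζ₁ k * ‖y₁‖ ^ ζ₂ k + ‖ι y₂‖ ^ ζ₁ k * ‖y₂‖ ^ ζ₂ k) *
          (‖ι (y₁ - y₂)‖ ^ δ₁ k * ‖y₁ - y₂‖ ^ δ₂ k))
    (hN0 : ∀ t : ℝ, 0 ≤ t → N t 0 = 0)
    (W Wt : ℕ → Submodule ℝ V)
    (hWfd : ∀ M, FiniteDimensional ℝ (W M)) (hWtfd : ∀ M, FiniteDimensional ℝ (Wt M))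
    (hdim : ∀ M, Module.finrank ℝ (W M) = Module.finrank ℝ (Wt M))
    (U : ℕ → Submodule ℝ H) (hUdef : ∀ M, U M = (W M).map ι.toLinearMap)
    (Ut : ℕ → Submodule ℝ H) (hUtdef : ∀ M, Ut M = (Wt M).map ι.toLinearMap)
    (hcompl₁ : ∀ M, IsCompl (U M) ((Ut M)ᗮ))
    (hcompl₂ : ∀ M, IsCompl (Ut M) ((U M)ᗮ))
    (P Q : ℕ → (H →L[ℝ] H))
    (hP : ∀ (M : ℕ) (x : H), P M x ∈ U M ∧ x - P M x ∈ (Ut M)ᗮ)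
    (hQ : ∀ (M : ℕ) (x : H), Q M x ∈ Ut M ∧ x - Q M x ∈ (U M)ᗮ)
    (ξ : ℕ → ℝ)
    (hξdef : ∀ M, ξ M =
      sInf {r : ℝ | ∃ Θ : V, Θ ≠ 0 ∧ ι Θ ∈ (U M)ᗮ ∧ r = ‖Θ‖ ^ 2 / ‖ι Θ‖ ^ 2})
    (hξ : Filter.Tendsto ξ Filter.atTop Filter.atTop) :
    ∀ R : ℝ, 0 < R → ∀ μ : ℝ, 0 < μ →
      ∃ M : ℕ, ∃ lam₀ : ℝ, 0 < lam₀ ∧ ∀ lam : ℝ, lam₀ ≤ lam →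
        ∀ y : ℝ → V, ContinuousOn y (Set.Ici 0) →
          ‖ι (y 0)‖ < R →
          (∀ t ∈ Set.Ici (0 : ℝ),
            HasDerivWithinAt (fun s : ℝ => j (ι (y s)))
              (-(A (y t)) - Arc t (y t) - N t (y t) - lam • j (P M (Q M (ι (y t)))))
              (Set.Ici 0) t) →
          ∀ s t : ℝ, 0 ≤ s → s ≤ t →
            ‖ι (y t)‖ ≤ Real.exp (-μ * (t - s)) * ‖ι (y s)‖ := by
  intro R hR μ hμ
  -- basic exponent facts
  have hδ₁pos : ∀ k, 0 < δ₁ k := fun k => by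
    have h1 := hge k; have h2 := hlt k; have h3 := hζ₂ k; linarith
  have r2 : ∀ u : ℝ, u ^ (2:ℝ) = u ^ 2 := fun u => by
    rw [show (2:ℝ) = ((2:ℕ):ℝ) by norm_num, Real.rpow_natCast]
  -- constants
  set R₁ : ℝ := max R 1 with hR₁def
  have hR₁ : 1 ≤ R₁ := le_max_right _ _
  have hRR₁ : R ≤ R₁ := le_max_left _ _
  set ε : ℝ := 1 / (8 * (n:ℝ) * CN + 8) with hεdef
  have hεden : (0:ℝ) < 8 * (n:ℝ) * CN + 8 := by positivity
  have hε : 0 < ε := by positivity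
  have hεmul : ε * (8 * (n:ℝ) * CN + 8) = 1 := by
    rw [hεdef]; field_simp
  choose C₁ hC₁0 hC₁ using fun k : Fin n =>
    young' R₁ ε (ζ₁ k + δ₁ k) (ζ₂ k + δ₂ k + 1) hR₁ hε (by have := hζ₂ k; have := hδ₂ k; linarith)
      (by have := hlt k; linarith)
      (by have := hge k; have := hζ₁ k; have := hζ₂ k; linarith)
  choose C₂ hC₂0 hC₂ using fun k : Fin n =>
    young' R₁ ε (δ₁ k) (δ₂ k + 1) hR₁ hε (by have := hδ₂ k; linarith)
      (by have h2 := hlt k; have := hζ₂ k; linarith) (by have := hge k; linarith)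
  set SC : ℝ := ∑ k : Fin n, (C₁ k + C₂ k) with hSCdef
  have hSC0 : 0 ≤ SC := Finset.sum_nonneg fun k _ => by
    have := hC₁0 k; have := hC₂0 k; linarith
  set K : ℝ := μ + 4 * Crc ^ 2 + CN * SC with hKdef
  have hK0 : 0 < K := by positivity
  clear_value R₁ ε SC K
  -- choose M with large Poincaré constant
  obtain ⟨M, hM⟩ := (hξ.eventually_ge_atTop (16 * K + 1)).exists
  obtain ⟨c, hc0, hc⟩ := findim_bound ι hι (Wt M) (hWtfd M)
  refine ⟨M, 2 * K + c ^ 2, by positivity, ?_⟩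
  intro lam hlam y hy hy0 hode
  -- the pointwise dissipativity estimate
  have hpt : ∀ t : ℝ, 0 ≤ t → ∀ v : V, ‖ι v‖ ≤ R →
      -(A v v) - Arc t v v - N t v v - lam * (j (P M (Q M (ι v))) v)
        ≤ -μ * ‖ι v‖ ^ 2 := by
    intro t ht v hvR
    -- the projection term equals ‖Q M (ι v)‖ ^ 2
    have hPQ : j (P M (Q M (ι v))) v = ‖Q M (ι v)‖ ^ 2 := by
      have o1 : ⟪P M (Q M (ι v)), ι v - Q M (ι v)⟫ = 0 := by
        have := (Submodule.mem_orthogonal (U M) (ι v - Q M (ι v))).mp (hQ M (ι v)).2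
        exact this _ (hP M (Q M (ι v))).1
      have o2 : ⟪Q M (ι v), Q M (ι v) - P M (Q M (ι v))⟫ = 0 := by
        have := (Submodule.mem_orthogonal (Ut M) (Q M (ι v) - P M (Q M (ι v)))).mp
          (hP M (Q M (ι v))).2
        exact this _ (hQ M (ι v)).1
      rw [inner_sub_right] at o1 o2
      rw [hj, ← real_inner_self_eq_norm_sq]
      rw [real_inner_comm (P M (Q M (ι v))) (Q M (ι v))] at o2
      linarith
    rcases eq_or_ne v 0 with rfl | hv0
    · simp only [map_zero, hArc, hN0 t ht, ContinuousLinearMap.zero_apply, norm_zero]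
      simp [hPQ]
    have hY0 : 0 < ‖v‖ := norm_pos_iff.mpr hv0
    have hx0 : 0 < ‖ι v‖ := by
      rw [norm_pos_iff]
      intro h0
      exact hv0 (hι (by rw [h0, map_zero]))
    have hx : (0:ℝ) ≤ ‖ι v‖ := hx0.le
    have hY : (0:ℝ) ≤ ‖v‖ := hY0.le
    have hxR₁ : ‖ι v‖ ≤ R₁ := le_trans hvR hRR₁
    -- A
    have hA := hAcoer v
    -- Arc bound
    have hArcB : -(Arc t v v) ≤ 2 * Crc * ‖ι v‖ * ‖v‖ := by
      rw [hArc]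
      have b1 : |B₁ t (ι v) v| ≤ Crc * ‖ι v‖ * ‖v‖ := by
        calc |B₁ t (ι v) v| ≤ ‖B₁ t (ι v)‖ * ‖v‖ := (B₁ t (ι v)).le_opNorm v
          _ ≤ (‖B₁ t‖ * ‖ι v‖) * ‖v‖ :=
              mul_le_mul_of_nonneg_right ((B₁ t).le_opNorm (ι v)) hY
          _ ≤ Crc * ‖ι v‖ * ‖v‖ :=
              mul_le_mul_of_nonneg_right (mul_le_mul_of_nonneg_right (hB₁ t ht) hx) hY
      have b2 : |j (B₂ t v) v| ≤ Crc * ‖ι v‖ * ‖v‖ := by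
        rw [hj]
        calc |⟪B₂ t v, ι v⟫| ≤ ‖B₂ t v‖ * ‖ι v‖ := abs_real_inner_le_norm _ _
          _ ≤ (‖B₂ t‖ * ‖v‖) * ‖ι v‖ :=
              mul_le_mul_of_nonneg_right ((B₂ t).le_opNorm v) (norm_nonneg _)
          _ ≤ (Crc * ‖v‖) * ‖ι v‖ :=
              mul_le_mul_of_nonneg_right (mul_le_mul_of_nonneg_right (hB₂ t ht) hY) hx
          _ = Crc * ‖ι v‖ * ‖v‖ := by ring
      have := abs_le.mp b1
      have := abs_le.mp b2
      simp only [ContinuousLinearMap.add_apply]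
      linarith [(abs_le.mp b1).1, (abs_le.mp b2).1]
    -- N bound
    have hz1 : ∀ b : ℝ, 0 ≤ b → (0:ℝ) ^ b ≤ 1 := by
      intro b hb
      rcases eq_or_lt_of_le hb with h | h
      · rw [← h, Real.rpow_zero]
      · rw [Real.zero_rpow (ne_of_gt h)]; norm_num
    have hNnorm : ‖N t v‖ ≤ CN * ∑ k : Fin n,
        (‖ι v‖ ^ ζ₁ k * ‖v‖ ^ ζ₂ k + 1) * (‖ι v‖ ^ δ₁ k * ‖v‖ ^ δ₂ k) := by
      have h0 := hN t ht v 0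
      rw [hN0 t ht, sub_zero, sub_zero] at h0
      refine le_trans h0 (mul_le_mul_of_nonneg_left (Finset.sum_le_sum fun k _ => ?_) hCN)
      apply mul_le_mul_of_nonneg_right _ (by positivity)
      have : ‖ι (0:V)‖ ^ ζ₁ k * ‖(0:V)‖ ^ ζ₂ k ≤ 1 := by
        simp only [map_zero, norm_zero]
        have h1 := hz1 _ (hζ₁ k)
        have h2 := hz1 _ (hζ₂ k)
        have h3 : (0:ℝ) ≤ (0:ℝ) ^ ζ₁ k := Real.rpow_nonneg le_rfl _
        nlinarith
      linarith
    have hNvv : -(N t v v) ≤ (CN * ∑ k : Fin n,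
        (‖ι v‖ ^ ζ₁ k * ‖v‖ ^ ζ₂ k + 1) * (‖ι v‖ ^ δ₁ k * ‖v‖ ^ δ₂ k)) * ‖v‖ := by
      have h1 : |N t v v| ≤ ‖N t v‖ * ‖v‖ := (N t v).le_opNorm v
      have h2 := (abs_le.mp h1).1
      have h3 : ‖N t v‖ * ‖v‖ ≤ (CN * ∑ k : Fin n,
          (‖ι v‖ ^ ζ₁ k * ‖v‖ ^ ζ₂ k + 1) * (‖ι v‖ ^ δ₁ k * ‖v‖ ^ δ₂ k)) * ‖v‖ :=
        mul_le_mul_of_nonneg_right hNnorm hY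
      linarith
    -- per-term Young estimate
    have hterm : ∀ k : Fin n,
        (‖ι v‖ ^ ζ₁ k * ‖v‖ ^ ζ₂ k + 1) * (‖ι v‖ ^ δ₁ k * ‖v‖ ^ δ₂ k) * ‖v‖
          ≤ 2 * ε * ‖v‖ ^ 2 + (C₁ k + C₂ k) * ‖ι v‖ ^ 2 := by
      intro k
      have e1 : ‖ι v‖ ^ ζ₁ k * ‖v‖ ^ ζ₂ k * (‖ι v‖ ^ δ₁ k * ‖v‖ ^ δ₂ k) * ‖v‖
          = ‖ι v‖ ^ (ζ₁ k + δ₁ k) * ‖v‖ ^ (ζ₂ k + δ₂ k + 1) := by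
        rw [Real.rpow_add hx0, show ζ₂ k + δ₂ k + 1 = ζ₂ k + (δ₂ k + 1) by ring,
          Real.rpow_add hY0, Real.rpow_add hY0, Real.rpow_one]
        ring
      have e2 : ‖ι v‖ ^ δ₁ k * ‖v‖ ^ δ₂ k * ‖v‖ = ‖ι v‖ ^ δ₁ k * ‖v‖ ^ (δ₂ k + 1) := by
        rw [Real.rpow_add hY0, Real.rpow_one]
        ring
      have y1 := hC₁ k (‖ι v‖) (‖v‖) hx hxR₁ hY
      have y2 := hC₂ k (‖ι v‖) (‖v‖) hx hxR₁ hY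
      rw [r2, r2] at y1 y2
      calc (‖ι v‖ ^ ζ₁ k * ‖v‖ ^ ζ₂ k + 1) * (‖ι v‖ ^ δ₁ k * ‖v‖ ^ δ₂ k) * ‖v‖
          = ‖ι v‖ ^ ζ₁ k * ‖v‖ ^ ζ₂ k * (‖ι v‖ ^ δ₁ k * ‖v‖ ^ δ₂ k) * ‖v‖
            + ‖ι v‖ ^ δ₁ k * ‖v‖ ^ δ₂ k * ‖v‖ := by ring
        _ = ‖ι v‖ ^ (ζ₁ k + δ₁ k) * ‖v‖ ^ (ζ₂ k + δ₂ k + 1)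
            + ‖ι v‖ ^ δ₁ k * ‖v‖ ^ (δ₂ k + 1) := by rw [e1, e2]
        _ ≤ (ε * ‖v‖ ^ 2 + C₁ k * ‖ι v‖ ^ 2) + (ε * ‖v‖ ^ 2 + C₂ k * ‖ι v‖ ^ 2) :=
            add_le_add y1 y2
        _ = 2 * ε * ‖v‖ ^ 2 + (C₁ k + C₂ k) * ‖ι v‖ ^ 2 := by ring
    -- sum the Young estimates
    have hsum : (∑ k : Fin n, (‖ι v‖ ^ ζ₁ k * ‖v‖ ^ ζ₂ k + 1) *
          (‖ι v‖ ^ δ₁ k * ‖v‖ ^ δ₂ k)) * ‖v‖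
        ≤ (n:ℝ) * (2 * ε * ‖v‖ ^ 2) + SC * ‖ι v‖ ^ 2 := by
      rw [Finset.sum_mul]
      calc ∑ k : Fin n, (‖ι v‖ ^ ζ₁ k * ‖v‖ ^ ζ₂ k + 1) *
            (‖ι v‖ ^ δ₁ k * ‖v‖ ^ δ₂ k) * ‖v‖
          ≤ ∑ k : Fin n, (2 * ε * ‖v‖ ^ 2 + (C₁ k + C₂ k) * ‖ι v‖ ^ 2) :=
            Finset.sum_le_sum fun k _ => hterm k
        _ = (n:ℝ) * (2 * ε * ‖v‖ ^ 2) + SC * ‖ι v‖ ^ 2 := by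
            rw [Finset.sum_add_distrib, Finset.sum_const, Finset.card_univ,
              Fintype.card_fin, nsmul_eq_mul, ← Finset.sum_mul, hSCdef]
    have hNfinal : -(N t v v) ≤ (1/4) * ‖v‖ ^ 2 + CN * SC * ‖ι v‖ ^ 2 := by
      have h1 : CN * ((n:ℝ) * (2 * ε * ‖v‖ ^ 2) + SC * ‖ι v‖ ^ 2)
          ≤ (1/4) * ‖v‖ ^ 2 + CN * SC * ‖ι v‖ ^ 2 := by
        have hq : (n:ℝ) * CN * (2 * ε) ≤ 1/4 :=
          eps_bound' ((n:ℝ) * CN) ε (by positivity) hε (by rw [hεdef]; field_simp)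
        have hq2 := mul_le_mul_of_nonneg_right hq (sq_nonneg ‖v‖)
        linarith only [hq2]
      have h2 : (CN * ∑ k : Fin n, (‖ι v‖ ^ ζ₁ k * ‖v‖ ^ ζ₂ k + 1) *
            (‖ι v‖ ^ δ₁ k * ‖v‖ ^ δ₂ k)) * ‖v‖
          ≤ CN * ((n:ℝ) * (2 * ε * ‖v‖ ^ 2) + SC * ‖ι v‖ ^ 2) := by
        rw [mul_assoc]
        exact mul_le_mul_of_nonneg_left hsum hCN
      linarith
    -- projection / Poincaré estimate
    have hproj : K * ‖ι v‖ ^ 2 ≤ (2 * K + c ^ 2) * ‖Q M (ι v)‖ ^ 2 + (1/2) * ‖v‖ ^ 2 := by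
      obtain ⟨w, hw, hιw⟩ : ∃ w ∈ Wt M, ι w = Q M (ι v) := by
        have := (hQ M (ι v)).1
        rw [hUtdef M] at this
        obtain ⟨w, hw, hww⟩ := this
        exact ⟨w, hw, hww⟩
      have hp1 : ξ M * ‖ι (v - w)‖ ^ 2 ≤ ‖v - w‖ ^ 2 := by
        rcases eq_or_ne (v - w) 0 with h0 | h0
        · rw [h0, map_zero, norm_zero]
          simp
        · have hmem : ι (v - w) ∈ (U M)ᗮ := by
            rw [map_sub, hιw]
            exact (hQ M (ι v)).2
          have hbdd : BddBelow {r : ℝ | ∃ Θ : V, Θ ≠ 0 ∧ ι Θ ∈ (U M)ᗮ ∧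
              r = ‖Θ‖ ^ 2 / ‖ι Θ‖ ^ 2} := by
            refine ⟨0, fun r hr => ?_⟩
            obtain ⟨Θ, _, _, rfl⟩ := hr
            positivity
          have hmem' : ‖v - w‖ ^ 2 / ‖ι (v - w)‖ ^ 2 ∈ {r : ℝ | ∃ Θ : V, Θ ≠ 0 ∧
              ι Θ ∈ (U M)ᗮ ∧ r = ‖Θ‖ ^ 2 / ‖ι Θ‖ ^ 2} := ⟨v - w, h0, hmem, rfl⟩
          have hle : ξ M ≤ ‖v - w‖ ^ 2 / ‖ι (v - w)‖ ^ 2 := by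
            rw [hξdef M]
            exact csInf_le hbdd hmem'
          have hιvw : (0:ℝ) < ‖ι (v - w)‖ := by
            rw [norm_pos_iff]
            intro hh
            exact h0 (hι (by rw [hh, map_zero]))
          rw [le_div_iff₀ (by positivity)] at hle
          linarith
      have hp2 : ‖v - w‖ ≤ ‖v‖ + c * ‖Q M (ι v)‖ := by
        calc ‖v - w‖ ≤ ‖v‖ + ‖w‖ := norm_sub_le _ _
          _ ≤ ‖v‖ + c * ‖ι w‖ := by linarith [hc w hw]
          _ = ‖v‖ + c * ‖Q M (ι v)‖ := by rw [hιw]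
      have hp3 : ‖ι v‖ ≤ ‖Q M (ι v)‖ + ‖ι (v - w)‖ := by
        have : ι v = Q M (ι v) + ι (v - w) := by
          rw [map_sub, hιw]; abel
        calc ‖ι v‖ = ‖Q M (ι v) + ι (v - w)‖ := by rw [← this]
          _ ≤ ‖Q M (ι v)‖ + ‖ι (v - w)‖ := norm_add_le _ _
      have hq0 : (0:ℝ) ≤ ‖Q M (ι v)‖ := norm_nonneg _
      have hw0 : (0:ℝ) ≤ ‖ι (v - w)‖ := norm_nonneg _
      have hvw0 : (0:ℝ) ≤ ‖v - w‖ := norm_nonneg _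
      have hK16 : 16 * K + 1 ≤ ξ M := hM
      have s1 : ‖ι v‖ ^ 2 ≤ 2 * ‖Q M (ι v)‖ ^ 2 + 2 * ‖ι (v - w)‖ ^ 2 :=
        sq_add_le' _ _ _ hq0 hw0 (norm_nonneg _) hp3
      have s2 : ‖v - w‖ ^ 2 ≤ 2 * ‖v‖ ^ 2 + 2 * c ^ 2 * ‖Q M (ι v)‖ ^ 2 := by
        have h := sq_add_le' (‖v‖) (c * ‖Q M (ι v)‖) (‖v - w‖) hY (by positivity) hvw0 hp2
        have h2 : 2 * ‖v‖ ^ 2 + 2 * (c * ‖Q M (ι v)‖) ^ 2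
            = 2 * ‖v‖ ^ 2 + 2 * c ^ 2 * ‖Q M (ι v)‖ ^ 2 := by ring
        linarith only [h, h2]
      have s3 : (16 * K) * ‖ι (v - w)‖ ^ 2 ≤ 2 * ‖v‖ ^ 2 + 2 * c ^ 2 * ‖Q M (ι v)‖ ^ 2 := by
        have h1 : (16 * K + 1) * ‖ι (v - w)‖ ^ 2 ≤ ξ M * ‖ι (v - w)‖ ^ 2 :=
          mul_le_mul_of_nonneg_right hK16 (sq_nonneg _)
        linarith only [h1, hp1, s2, sq_nonneg ‖ι (v - w)‖]
      have s4 := mul_le_mul_of_nonneg_left s1 hK0.le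
      have s5 : (0:ℝ) ≤ c ^ 2 * ‖Q M (ι v)‖ ^ 2 := by positivity
      linarith only [s3, s4, s5, sq_nonneg ‖v‖]
    -- combine everything
    have hq2 : (0:ℝ) ≤ ‖Q M (ι v)‖ ^ 2 := sq_nonneg _
    have hlamq : (2 * K + c ^ 2) * ‖Q M (ι v)‖ ^ 2 ≤ lam * ‖Q M (ι v)‖ ^ 2 :=
      mul_le_mul_of_nonneg_right hlam hq2
    have hArcB2 : -(Arc t v v) ≤ (1/4) * ‖v‖ ^ 2 + 4 * Crc ^ 2 * ‖ι v‖ ^ 2 :=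
      arc_bound' Crc (‖ι v‖) (‖v‖) _ hArcB
    rw [hPQ, hA]
    have hKx : K * ‖ι v‖ ^ 2 = μ * ‖ι v‖ ^ 2 + 4 * Crc ^ 2 * ‖ι v‖ ^ 2
        + CN * SC * ‖ι v‖ ^ 2 := by rw [hKdef]; ring
    linarith only [hproj, hlamq, hArcB2, hNfinal, hKx]
  -- now the ODE / Gronwall part
  set g : ℝ → ℝ := fun t => ‖ι (y t)‖ ^ 2 with hgdef
  have hgcont : ContinuousOn g (Set.Ici 0) := by
    apply ContinuousOn.pow
    exact (ι.continuous.comp_continuousOn hy).norm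
  have hg0 : g 0 < R ^ 2 := by
    have hh := mul_lt_mul'' hy0 hy0 (norm_nonneg (ι (y 0))) (norm_nonneg (ι (y 0)))
    simp only [hgdef, pow_two]
    exact hh
  have hgnn : ∀ t, 0 ≤ g t := fun t => sq_nonneg _
  set Dval : ℝ → ℝ := fun t => -(A (y t) (y t)) - Arc t (y t) (y t) - N t (y t) (y t)
    - lam * (j (P M (Q M (ι (y t)))) (y t)) with hDvaldef
  have hg' : ∀ t ∈ Set.Ici (0:ℝ), HasDerivWithinAt g (2 * Dval t) (Set.Ici 0) t := by
    intro t ht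
    have h1 := deriv_sq_norm ι j hj y hy _ t ht (hode t ht)
    have h2 : (-(A (y t)) - Arc t (y t) - N t (y t) - lam • j (P M (Q M (ι (y t))))) (y t)
        = Dval t := by
      simp only [ContinuousLinearMap.sub_apply, ContinuousLinearMap.neg_apply,
        ContinuousLinearMap.smul_apply, smul_eq_mul, hDvaldef]
    rwa [h2] at h1
  have hDval : ∀ t, 0 ≤ t → ‖ι (y t)‖ ≤ R → 2 * Dval t ≤ -(2 * μ) * g t := by
    intro t ht hRt
    have h1 := hpt t ht (y t) hRt
    simp only [hDvaldef, hgdef]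
    linarith only [h1]
  -- bootstrap: ‖ι (y t)‖ < R for all t ≥ 0
  have hbound : ∀ t, 0 ≤ t → ‖ι (y t)‖ < R := by
    by_contra hcon
    push_neg at hcon
    obtain ⟨t₁, ht₁0, ht₁R⟩ := hcon
    set Bad : Set ℝ := Set.Ici 0 ∩ (fun t => ‖ι (y t)‖) ⁻¹' (Set.Ici R) with hBaddef
    have hBadne : Bad.Nonempty := ⟨t₁, ht₁0, ht₁R⟩
    have hBadclosed : IsClosed Bad :=
      ContinuousOn.preimage_isClosed_of_isClosed
        ((ι.continuous.comp_continuousOn hy).norm) isClosed_Ici isClosed_Ici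
    have hBadbdd : BddBelow Bad := ⟨0, fun t ht => ht.1⟩
    set t₀ : ℝ := sInf Bad with ht₀def
    have ht₀mem : t₀ ∈ Bad := hBadclosed.csInf_mem hBadne hBadbdd
    have ht₀0 : 0 ≤ t₀ := ht₀mem.1
    have ht₀R : R ≤ ‖ι (y t₀)‖ := ht₀mem.2
    have h0notin : (0:ℝ) ∉ Bad := by
      intro h
      exact absurd h.2 (not_le.mpr hy0)
    have ht₀pos : 0 < t₀ := by
      rcases eq_or_lt_of_le ht₀0 with h | h
      · exact absurd (h ▸ ht₀mem) h0notin
      · exact h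
    have hless : ∀ τ, 0 ≤ τ → τ < t₀ → ‖ι (y τ)‖ < R := by
      intro τ hτ0 hτt₀
      by_contra hcc
      push_neg at hcc
      have : τ ∈ Bad := ⟨hτ0, hcc⟩
      exact absurd (csInf_le hBadbdd this) (not_le.mpr hτt₀)
    have hanti : AntitoneOn g (Set.Icc 0 t₀) := by
      apply antitoneOn_of_deriv_nonpos (convex_Icc 0 t₀)
        (hgcont.mono (Set.Icc_subset_Ici_self))
      · intro τ hτ
        rw [interior_Icc] at hτ
        have hd : HasDerivAt g (2 * Dval τ) τ :=
          (hg' τ (le_of_lt hτ.1)).hasDerivAt (Ici_mem_nhds hτ.1)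
        exact hd.differentiableAt.differentiableWithinAt
      · intro τ hτ
        rw [interior_Icc] at hτ
        have hd : HasDerivAt g (2 * Dval τ) τ :=
          (hg' τ (le_of_lt hτ.1)).hasDerivAt (Ici_mem_nhds hτ.1)
        rw [hd.deriv]
        have h1 := hDval τ (le_of_lt hτ.1) (le_of_lt (hless τ (le_of_lt hτ.1) hτ.2))
        have h2 : 0 ≤ 2 * μ * g τ := by positivity
        linarith only [h1, h2]
    have h1 : g t₀ ≤ g 0 :=
      hanti (Set.left_mem_Icc.mpr ht₀0) (Set.mem_Icc.mpr ⟨ht₀0, le_rfl⟩) ht₀0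
    have h2 : R ^ 2 ≤ g t₀ := by
      have hh := mul_le_mul ht₀R ht₀R hR.le (norm_nonneg (ι (y t₀)))
      simp only [hgdef, pow_two]
      exact hh
    linarith
  -- exponential decay via the antitone function exp(2μt) * g t
  have hanti2 : AntitoneOn (fun t => Real.exp (2 * μ * t) * g t) (Set.Ici 0) := by
    have hEc : Continuous fun t : ℝ => Real.exp (2 * μ * t) := by continuity
    apply antitoneOn_of_deriv_nonpos (convex_Ici 0) (hEc.continuousOn.mul hgcont)
    · intro τ hτ
      rw [interior_Ici] at hτ
      have hτ0 : (0:ℝ) < τ := hτ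
      have hd : HasDerivAt g (2 * Dval τ) τ :=
        (hg' τ hτ0.le).hasDerivAt (Ici_mem_nhds hτ0)
      have hE : HasDerivAt (fun u : ℝ => Real.exp (2 * μ * u))
          (Real.exp (2 * μ * τ) * (2 * μ)) τ := by
        have h1 : HasDerivAt (fun u : ℝ => 2 * μ * u) (2 * μ) τ := by
          simpa using (hasDerivAt_id τ).const_mul (2 * μ)
        exact h1.exp
      exact (hE.mul hd).differentiableAt.differentiableWithinAt
    · intro τ hτ
      rw [interior_Ici] at hτ
      have hτ0 : (0:ℝ) < τ := hτ
      have hd : HasDerivAt g (2 * Dval τ) τ :=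
        (hg' τ hτ0.le).hasDerivAt (Ici_mem_nhds hτ0)
      have hE : HasDerivAt (fun u : ℝ => Real.exp (2 * μ * u))
          (Real.exp (2 * μ * τ) * (2 * μ)) τ := by
        have h1 : HasDerivAt (fun u : ℝ => 2 * μ * u) (2 * μ) τ := by
          simpa using (hasDerivAt_id τ).const_mul (2 * μ)
        exact h1.exp
      have hprod := hE.mul hd
      rw [hprod.deriv]
      have hDv := hDval τ hτ0.le (le_of_lt (hbound τ hτ0.le))
      have hexp := Real.exp_pos (2 * μ * τ)
      have h1 := mul_le_mul_of_nonneg_left hDv hexp.le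
      linarith only [h1]
  intro s t hs hst
  have ht0 : (0:ℝ) ≤ t := le_trans hs hst
  have hψ := hanti2 (Set.mem_Ici.mpr hs) (Set.mem_Ici.mpr ht0) hst
  simp only at hψ
  -- convert to the final estimate
  have hgt : g t ≤ Real.exp (-(2 * μ) * (t - s)) * g s := by
    have hepos : (0:ℝ) < Real.exp (-(2 * μ * t)) := Real.exp_pos _
    have h1 := mul_le_mul_of_nonneg_right hψ hepos.le
    have e1 : Real.exp (2 * μ * t) * g t * Real.exp (-(2 * μ * t)) = g t := by
      rw [mul_comm (Real.exp (2 * μ * t)) (g t), mul_assoc, ← Real.exp_add]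
      simp
    have e2 : Real.exp (2 * μ * s) * g s * Real.exp (-(2 * μ * t))
        = Real.exp (-(2 * μ) * (t - s)) * g s := by
      rw [mul_comm (Real.exp (2 * μ * s)) (g s), mul_assoc, ← Real.exp_add]
      ring_nf
    rw [e1, e2] at h1
    exact h1
  have hb0 : (0:ℝ) ≤ Real.exp (-μ * (t - s)) * ‖ι (y s)‖ := by positivity
  have hsq : ‖ι (y t)‖ ^ 2 ≤ (Real.exp (-μ * (t - s)) * ‖ι (y s)‖) ^ 2 := by
    have e3 : (Real.exp (-μ * (t - s)) * ‖ι (y s)‖) ^ 2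
        = Real.exp (-(2 * μ) * (t - s)) * g s := by
      simp only [hgdef]
      rw [mul_pow, sq (Real.exp (-μ * (t - s))), ← Real.exp_add]
      ring_nf
    rw [e3]
    exact hgt
  have := Real.sqrt_le_sqrt hsq
  rwa [Real.sqrt_sq (norm_nonneg _), Real.sqrt_sq hb0] at this
end

section
/- Let μ > 0, D ≥ 0, p > 0 and R ≥ 0. Let f : [0,∞) → ℝ be a differentiable nonnegative function with f(0) ≤ R² and f'(t) ≤ −(2μ + D·R^p − D·f(t)^{p/2})·f(t) for all t ≥ 0. Then f(t) ≤ e^{−2μ(t−s)}·f(s) for all 0 ≤ s ≤ t. (The scalar decay lemma used in the proof of Theorem 3.1 to pass from the differential inequality for ‖y(t)‖_H² to the exponential decay estimate.) -/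
open Set

/-- The scalar decay lemma: a nonnegative function satisfying the differential
inequality `f' ≤ -(2μ + D R^p - D f^{p/2}) f` with `f 0 ≤ R²` decays exponentially. -/
theorem stmt13
    (μ D p R : ℝ) (hμ : 0 < μ) (hD : 0 ≤ D) (hp : 0 < p) (hR : 0 ≤ R)
    (f f' : ℝ → ℝ)
    (hderiv : ∀ t ∈ Set.Ici (0 : ℝ), HasDerivWithinAt f (f' t) (Set.Ici 0) t)
    (hnonneg : ∀ t : ℝ, 0 ≤ t → 0 ≤ f t)
    (h0 : f 0 ≤ R ^ 2)
    (hineq : ∀ t : ℝ, 0 ≤ t →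
      f' t ≤ -(2 * μ + D * R ^ p - D * f t ^ (p / 2)) * f t) :
    ∀ s t : ℝ, 0 ≤ s → s ≤ t →
      f t ≤ Real.exp (-(2 * μ) * (t - s)) * f s := by
  have hRp : ((R : ℝ) ^ 2 : ℝ) ^ (p / 2) = R ^ p := by
    rw [← Real.rpow_natCast R 2, ← Real.rpow_mul hR]
    norm_num
    rw [show (2 : ℝ) * (p / 2) = p by ring]
  have hcont : ContinuousOn f (Set.Ici 0) := fun x hx => (hderiv x hx).continuousWithinAt
  -- Step 1: f ≤ R^2 on [0, ∞)
  have key : ∀ t : ℝ, 0 ≤ t → f t ≤ R ^ 2 := by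
    intro t ht
    -- find δ such that small ε keeps the bracket positive
    have hcg : ContinuousAt (fun ε : ℝ => D * (R ^ 2 + ε) ^ (p / 2)) 0 := by
      apply ContinuousAt.mul continuousAt_const
      have h1 : ContinuousAt (fun x : ℝ => x ^ (p / 2)) (R ^ 2 + 0) :=
        Real.continuousAt_rpow_const _ _ (Or.inr (by positivity))
      exact h1.comp (by fun_prop)
    have hlt : (fun ε : ℝ => D * (R ^ 2 + ε) ^ (p / 2)) 0 < D * R ^ p + 2 * μ := by
      simp only [add_zero, hRp]
      linarith
    have h2 : ∀ᶠ ε in nhds (0 : ℝ),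
        D * (R ^ 2 + ε) ^ (p / 2) < D * R ^ p + 2 * μ :=
      hcg.eventually (gt_mem_nhds hlt)
    rw [Metric.eventually_nhds_iff] at h2
    obtain ⟨δ, hδ, hδ2⟩ := h2
    -- it suffices to show f t ≤ R^2 + ε for all ε > 0
    have hεbound : ∀ ε : ℝ, 0 < ε → ε < δ → f t ≤ R ^ 2 + ε := by
      intro ε hε hεδ
      have hbracket : D * (R ^ 2 + ε) ^ (p / 2) < D * R ^ p + 2 * μ := by
        apply hδ2
        simpa [abs_of_pos hε] using hεδ
      have := image_le_of_deriv_right_lt_deriv_boundary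
        (f := f) (f' := f') (a := 0) (b := t)
        (hcont.mono (fun x hx => hx.1))
        (fun x hx => (hderiv x hx.1).mono (Ici_subset_Ici.2 hx.1))
        (B := fun _ => R ^ 2 + ε) (B' := fun _ => 0)
        (by simpa using h0.trans (by linarith))
        (fun x => hasDerivAt_const x _)
        (fun x hx hfx => by
          have h3 : f' x ≤ -(2 * μ + D * R ^ p - D * (R ^ 2 + ε) ^ (p / 2)) * (R ^ 2 + ε) := by
            have := hineq x hx.1
            rw [hfx] at this
            exact this
          have h4 : 0 < (2 * μ + D * R ^ p - D * (R ^ 2 + ε) ^ (p / 2)) * (R ^ 2 + ε) := by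
            apply mul_pos (by linarith) (by positivity)
          show f' x < 0
          linarith)
      exact this (right_mem_Icc.2 ht)
    by_contra hcon
    push_neg at hcon
    obtain ⟨ε, hε1, hε2, hε3⟩ : ∃ ε : ℝ, 0 < ε ∧ ε < δ ∧ R ^ 2 + ε < f t := by
      refine ⟨min (δ / 2) ((f t - R ^ 2) / 2), lt_min (by linarith) (by linarith), ?_, ?_⟩
      · exact lt_of_le_of_lt (min_le_left _ _) (by linarith)
      · have : min (δ / 2) ((f t - R ^ 2) / 2) ≤ (f t - R ^ 2) / 2 := min_le_right _ _
        linarith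
    exact absurd (hεbound ε hε1 hε2) (by linarith)
  -- Step 2: g = exp(2μt) * f t is antitone on [0, ∞)
  set g : ℝ → ℝ := fun t => Real.exp (2 * μ * t) * f t with hg_def
  have hg_deriv : ∀ x : ℝ, 0 < x →
      HasDerivAt g (Real.exp (2 * μ * x) * (2 * μ) * f x + Real.exp (2 * μ * x) * f' x) x := by
    intro x hx
    have hf : HasDerivAt f (f' x) x :=
      (hderiv x hx.le).hasDerivAt (Ici_mem_nhds hx)
    have hl : HasDerivAt (fun t : ℝ => 2 * μ * t) (2 * μ) x := by
      simpa using (hasDerivAt_id x).const_mul (2 * μ)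
    have he : HasDerivAt (fun t => Real.exp (2 * μ * t)) (Real.exp (2 * μ * x) * (2 * μ)) x :=
      hl.exp
    exact he.mul hf
  have hanti : AntitoneOn g (Ici 0) := by
    apply antitoneOn_of_deriv_nonpos (convex_Ici 0)
    · exact fun x hx =>
        (Real.continuous_exp.comp (continuous_const.mul continuous_id)).continuousWithinAt.mul
          (hcont x hx)
    · rw [interior_Ici]
      exact fun x hx => (hg_deriv x hx).differentiableAt.differentiableWithinAt
    · rw [interior_Ici]
      intro x hx
      rw [(hg_deriv x hx).deriv]
      have hf1 := hineq x hx.le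
      have hf2 : f x ^ (p / 2) ≤ R ^ p := by
        rw [← hRp]
        exact Real.rpow_le_rpow (hnonneg x hx.le) (key x hx.le) (by positivity)
      have hf3 : 0 ≤ f x := hnonneg x hx.le
      have he : 0 < Real.exp (2 * μ * x) := Real.exp_pos _
      have h5 : 2 * μ * f x + f' x ≤ -(D * R ^ p - D * f x ^ (p / 2)) * f x := by
        nlinarith
      have h6 : 0 ≤ (D * R ^ p - D * f x ^ (p / 2)) * f x := by
        apply mul_nonneg _ hf3
        have := mul_le_mul_of_nonneg_left hf2 hD
        linarith
      nlinarith
  -- conclusion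
  intro s t hs hst
  have ht : (0 : ℝ) ≤ t := hs.trans hst
  have hgle : Real.exp (2 * μ * t) * f t ≤ Real.exp (2 * μ * s) * f s :=
    hanti hs ht hst
  have het : 0 < Real.exp (2 * μ * t) := Real.exp_pos _
  rw [show -(2 * μ) * (t - s) = 2 * μ * s - 2 * μ * t by ring, Real.exp_sub,
    div_mul_eq_mul_div, le_div_iff₀ het]
  linarith [hgle, mul_comm (f t) (Real.exp (2 * μ * t))]
end

section
/- Suppose N : V → V' satisfies Assumption (N) with n = 1 and data (C_N, ζ₁, ζ₂, δ₁, δ₂), so ζ₂ + δ₂ < 1 and δ₁ + δ₂ ≥ 1. Let T > 0, I = (0,T), B > 0, and let w₁, w₂ : I → V be strongly measurable with ‖wᵢ‖_{L²(I,V)} ≤ B and ess sup_{t∈I} ‖wᵢ(t)‖_H ≤ B for i = 1,2. Then there exists a constant C ≥ 0, depending only on C_N, ζ₁, ζ₂, δ₁, δ₂ and B, such that ‖ N∘w₁ − N∘w₂ ‖_{L²(I,V')} ≤ C·‖ w₁ − w₂ ‖_{L²(I,H)}^{1 − ζ₂ − δ₂}, where ‖w₁ − w₂‖_{L²(I,H)}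 is the L² norm of t ↦ ‖w₁(t) − w₂(t)‖_H. (The continuity estimate for the Nemytskii operator of the nonlinearity proved in Section 3.3 of the paper in the Galerkin limit argument.) -/
open MeasureTheory
open scoped ENNReal

/-! Pointwise, the bound ‖wᵢ(t)‖_H ≤ B lets one spend the surplus δ₁ + δ₂ + ζ₂ - 1 ≥ 0 of the
exponent of ‖w₁ - w₂‖_H on a constant, leaving
‖N w₁ - N w₂‖_{V'} ≤ K (‖w₁‖_V + ‖w₂‖_V)^(ζ₂+δ₂) ‖w₁ - w₂‖_H^(1-ζ₂-δ₂).
Hölder's inequality with the dual exponents 2/(ζ₂+δ₂) and 2/(1-ζ₂-δ₂) bounds the L² norm of the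
right-hand side by ‖‖w₁‖_V + ‖w₂‖_V‖_{L²}^(ζ₂+δ₂) ‖w₁ - w₂‖_{L²(H)}^(1-ζ₂-δ₂), and the first
factor is at most (2B)^(ζ₂+δ₂). -/

theorem eLpNorm_norm_rpow_mul_norm_rpow_le {α E F : Type*} [MeasurableSpace α] {μ : Measure α}
    [SeminormedAddCommGroup E] [SeminormedAddCommGroup F] {f : α → E} {g : α → F}
    (hf : AEStronglyMeasurable f μ) (hg : AEStronglyMeasurable g μ)
    {p : ℝ≥0∞} (hp0 : p ≠ 0) (hptop : p ≠ ∞)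
    {σ θ : ℝ} (hσ : 0 ≤ σ) (hθ : 0 ≤ θ) (hσθ : σ + θ = 1) :
    eLpNorm (fun x => ‖f x‖ ^ σ * ‖g x‖ ^ θ) p μ ≤ eLpNorm f p μ ^ σ * eLpNorm g p μ ^ θ := by
  have hp : 0 < p.toReal := ENNReal.toReal_pos hp0 hptop
  simp only [eLpNorm_eq_lintegral_rpow_enorm_toReal hp0 hptop]
  have hpt : ∀ x, ‖‖f x‖ ^ σ * ‖g x‖ ^ θ‖ₑ ^ p.toReal
      = (‖f x‖ₑ ^ p.toReal) ^ σ * (‖g x‖ₑ ^ p.toReal) ^ θ := fun x => by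
    rw [enorm_mul, Real.enorm_rpow_of_nonneg (norm_nonneg _) hσ,
      Real.enorm_rpow_of_nonneg (norm_nonneg _) hθ, enorm_norm, enorm_norm,
      ENNReal.mul_rpow_of_nonneg _ _ hp.le, ← ENNReal.rpow_mul, ← ENNReal.rpow_mul,
      ← ENNReal.rpow_mul, ← ENNReal.rpow_mul, mul_comm σ, mul_comm θ]
  simp_rw [hpt]
  calc (∫⁻ x, (‖f x‖ₑ ^ p.toReal) ^ σ * (‖g x‖ₑ ^ p.toReal) ^ θ ∂μ) ^ (1 / p.toReal)
      ≤ ((∫⁻ x, ‖f x‖ₑ ^ p.toReal ∂μ) ^ σ * (∫⁻ x, ‖g x‖ₑ ^ p.toReal ∂μ) ^ θ)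
          ^ (1 / p.toReal) := by
        gcongr
        exact ENNReal.lintegral_mul_norm_pow_le (hf.enorm.pow_const _) (hg.enorm.pow_const _)
          hσ hθ hσθ
    _ = _ := by
        rw [ENNReal.mul_rpow_of_nonneg _ _ (by positivity), ← ENNReal.rpow_mul,
          ← ENNReal.rpow_mul, ← ENNReal.rpow_mul, ← ENNReal.rpow_mul, mul_comm σ, mul_comm θ]

theorem Real.rpow_le_rpow_sub_mul_rpow {x M θ δ : ℝ} (hx : 0 ≤ x) (hxM : x ≤ M) (hθ : 0 ≤ θ)
    (hθδ : θ ≤ δ) : x ^ δ ≤ M ^ (δ - θ) * x ^ θ := by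
  calc x ^ δ = x ^ (δ - θ) * x ^ θ := by
        rw [← Real.rpow_add_of_nonneg hx (sub_nonneg.2 hθδ) hθ, sub_add_cancel]
    _ ≤ M ^ (δ - θ) * x ^ θ := by gcongr

section AssumptionN

variable {E F 𝓕 : Type*} [SeminormedAddCommGroup E] [SeminormedAddCommGroup F]
  [FunLike 𝓕 E F] [AddMonoidHomClass 𝓕 E F]

theorem assumptionN_bound_le_of_norm_le (ι : 𝓕) {CN ζ₁ ζ₂ δ₁ δ₂ B : ℝ} {y₁ y₂ : E}
    (hCN : 0 ≤ CN) (hζ₁ : 0 ≤ ζ₁) (hζ₂ : 0 ≤ ζ₂) (hδ₂ : 0 ≤ δ₂)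
    (hle : ζ₂ + δ₂ ≤ 1) (hge : 1 ≤ δ₁ + δ₂) (h₁ : ‖ι y₁‖ ≤ B) (h₂ : ‖ι y₂‖ ≤ B) :
    CN * (‖ι y₁‖ ^ ζ₁ * ‖y₁‖ ^ ζ₂ + ‖ι y₂‖ ^ ζ₁ * ‖y₂‖ ^ ζ₂) *
        (‖ι (y₁ - y₂)‖ ^ δ₁ * ‖y₁ - y₂‖ ^ δ₂)
      ≤ 2 * CN * B ^ ζ₁ * (2 * B) ^ (δ₁ + δ₂ + ζ₂ - 1) *
        ((‖y₁‖ + ‖y₂‖) ^ (ζ₂ + δ₂) * ‖ι y₁ - ι y₂‖ ^ (1 - ζ₂ - δ₂)) := by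
  set s := ‖y₁‖ + ‖y₂‖
  have hB : 0 ≤ B := (norm_nonneg _).trans h₁
  have hd : ‖ι (y₁ - y₂)‖ ≤ 2 * B := by
    rw [map_sub, two_mul]; exact (norm_sub_le _ _).trans (add_le_add h₁ h₂)
  have hS : ‖ι y₁‖ ^ ζ₁ * ‖y₁‖ ^ ζ₂ + ‖ι y₂‖ ^ ζ₁ * ‖y₂‖ ^ ζ₂ ≤ 2 * (B ^ ζ₁ * s ^ ζ₂) := by
    have h₁' : ‖y₁‖ ≤ s := le_add_of_nonneg_right (norm_nonneg _)
    have h₂' : ‖y₂‖ ≤ s := le_add_of_nonneg_left (norm_nonneg _)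
    rw [two_mul]; gcongr
  have hP : ‖ι (y₁ - y₂)‖ ^ δ₁ * ‖y₁ - y₂‖ ^ δ₂
      ≤ (2 * B) ^ (δ₁ + δ₂ + ζ₂ - 1) * ‖ι (y₁ - y₂)‖ ^ (1 - ζ₂ - δ₂) * s ^ δ₂ := by
    have hexp : δ₁ + δ₂ + ζ₂ - 1 = δ₁ - (1 - ζ₂ - δ₂) := by ring
    rw [hexp]
    gcongr
    · exact Real.rpow_le_rpow_sub_mul_rpow (norm_nonneg _) hd (by linarith) (by linarith)
    · exact norm_sub_le _ _
  calc _ ≤ CN * (2 * (B ^ ζ₁ * s ^ ζ₂)) *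
        ((2 * B) ^ (δ₁ + δ₂ + ζ₂ - 1) * ‖ι (y₁ - y₂)‖ ^ (1 - ζ₂ - δ₂) * s ^ δ₂) := by gcongr
    _ = _ := by
        rw [Real.rpow_add_of_nonneg (by positivity) hζ₂ hδ₂, map_sub]; ring

end AssumptionN

theorem stmt17_general
    {H V : Type*}
    [NormedAddCommGroup H] [InnerProductSpace ℝ H]
    [NormedAddCommGroup V] [InnerProductSpace ℝ V]
    (ι : V →L[ℝ] H)
    (N : V → (V →L[ℝ] ℝ))
    (CN ζ₁ ζ₂ δ₁ δ₂ : ℝ)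
    (hCN : 0 ≤ CN) (hζ₁ : 0 ≤ ζ₁) (hζ₂ : 0 ≤ ζ₂) (hδ₂ : 0 ≤ δ₂)
    (hlt : ζ₂ + δ₂ < 1) (hge : 1 ≤ δ₁ + δ₂)
    (hN : ∀ y₁ y₂ : V,
      ‖N y₁ - N y₂‖ ≤ CN * (‖ι y₁‖ ^ ζ₁ * ‖y₁‖ ^ ζ₂ + ‖ι y₂‖ ^ ζ₁ * ‖y₂‖ ^ ζ₂) *
        (‖ι (y₁ - y₂)‖ ^ δ₁ * ‖y₁ - y₂‖ ^ δ₂))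
    (T : ℝ) (B : ℝ) (hB : 0 < B) :
    ∃ C : ℝ, 0 ≤ C ∧ ∀ w₁ w₂ : ℝ → V,
      AEStronglyMeasurable w₁ (volume.restrict (Set.Ioo 0 T)) →
      AEStronglyMeasurable w₂ (volume.restrict (Set.Ioo 0 T)) →
      eLpNorm w₁ 2 (volume.restrict (Set.Ioo 0 T)) ≤ ENNReal.ofReal B →
      eLpNorm w₂ 2 (volume.restrict (Set.Ioo 0 T)) ≤ ENNReal.ofReal B →
      (∀ᵐ t ∂(volume.restrict (Set.Ioo 0 T)), ‖ι (w₁ t)‖ ≤ B) →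
      (∀ᵐ t ∂(volume.restrict (Set.Ioo 0 T)), ‖ι (w₂ t)‖ ≤ B) →
      eLpNorm (fun t => N (w₁ t) - N (w₂ t)) 2 (volume.restrict (Set.Ioo 0 T))
        ≤ ENNReal.ofReal C *
          eLpNorm (fun t => ι (w₁ t) - ι (w₂ t)) 2 (volume.restrict (Set.Ioo 0 T))
            ^ (1 - ζ₂ - δ₂) := by
  set μ := volume.restrict (Set.Ioo 0 T)
  set K := 2 * CN * B ^ ζ₁ * (2 * B) ^ (δ₁ + δ₂ + ζ₂ - 1)
  have hK : 0 ≤ K := by positivity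
  refine ⟨K * (2 * B) ^ (ζ₂ + δ₂), by positivity, fun w₁ w₂ hw₁ hw₂ hL₁ hL₂ hH₁ hH₂ => ?_⟩
  set s : ℝ → ℝ := fun t => ‖w₁ t‖ + ‖w₂ t‖
  have hs : eLpNorm s 2 μ ≤ ENNReal.ofReal (2 * B) := by
    calc eLpNorm s 2 μ ≤ eLpNorm (fun t => ‖w₁ t‖) 2 μ + eLpNorm (fun t => ‖w₂ t‖) 2 μ :=
          eLpNorm_add_le hw₁.norm hw₂.norm one_le_two
      _ = eLpNorm w₁ 2 μ + eLpNorm w₂ 2 μ := by rw [eLpNorm_norm, eLpNorm_norm]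
      _ ≤ ENNReal.ofReal (2 * B) := by
          rw [two_mul, ENNReal.ofReal_add hB.le hB.le]; exact add_le_add hL₁ hL₂
  have hpt : ∀ᵐ t ∂μ, ‖N (w₁ t) - N (w₂ t)‖
      ≤ K * (‖s t‖ ^ (ζ₂ + δ₂) * ‖ι (w₁ t) - ι (w₂ t)‖ ^ (1 - ζ₂ - δ₂)) := by
    filter_upwards [hH₁, hH₂] with t h₁ h₂
    rw [Real.norm_of_nonneg (by positivity)]
    exact (hN _ _).trans (assumptionN_bound_le_of_norm_le ι hCN hζ₁ hζ₂ hδ₂ hlt.le hge h₁ h₂)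
  have hιw : AEStronglyMeasurable (fun t => ι (w₁ t) - ι (w₂ t)) μ :=
    (ι.continuous.comp_aestronglyMeasurable hw₁).sub (ι.continuous.comp_aestronglyMeasurable hw₂)
  calc eLpNorm (fun t => N (w₁ t) - N (w₂ t)) 2 μ
      ≤ ENNReal.ofReal K * eLpNorm (fun t => ‖s t‖ ^ (ζ₂ + δ₂) *
          ‖ι (w₁ t) - ι (w₂ t)‖ ^ (1 - ζ₂ - δ₂)) 2 μ := by
        refine (eLpNorm_mono_ae_real hpt).trans_eq ?_
        rw [← Real.enorm_of_nonneg hK]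
        exact eLpNorm_const_smul K _ 2 μ
    _ ≤ ENNReal.ofReal K * (ENNReal.ofReal (2 * B) ^ (ζ₂ + δ₂) *
          eLpNorm (fun t => ι (w₁ t) - ι (w₂ t)) 2 μ ^ (1 - ζ₂ - δ₂)) := by
        gcongr
        refine (eLpNorm_norm_rpow_mul_norm_rpow_le (hw₁.norm.add hw₂.norm) hιw two_ne_zero
          ENNReal.ofNat_ne_top (by positivity) (by linarith) (by ring)).trans ?_
        gcongr
        exact hs
    _ = _ := by
        rw [ENNReal.ofReal_mul hK, ENNReal.ofReal_rpow_of_pos (by positivity), mul_assoc]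

/-- Continuity estimate for the Nemytskii operator of the nonlinearity
(Galerkin limit argument in Section 3.3 of the paper). -/
theorem stmt17
    {H V : Type*}
    [NormedAddCommGroup H] [InnerProductSpace ℝ H] [CompleteSpace H]
    [NormedAddCommGroup V] [InnerProductSpace ℝ V] [CompleteSpace V]
    (ι : V →L[ℝ] H) (hι : Function.Injective ι) (hdense : DenseRange ι)
    (N : V → (V →L[ℝ] ℝ))
    (CN ζ₁ ζ₂ δ₁ δ₂ : ℝ)
    (hCN : 0 ≤ CN) (hζ₁ : 0 ≤ ζ₁) (hζ₂ : 0 ≤ ζ₂) (hδ₁ : 0 ≤ δ₁) (hδ₂ : 0 ≤ δ₂)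
    (hlt : ζ₂ + δ₂ < 1) (hge : 1 ≤ δ₁ + δ₂)
    (hN : ∀ y₁ y₂ : V,
      ‖N y₁ - N y₂‖ ≤ CN * (‖ι y₁‖ ^ ζ₁ * ‖y₁‖ ^ ζ₂ + ‖ι y₂‖ ^ ζ₁ * ‖y₂‖ ^ ζ₂) *
        (‖ι (y₁ - y₂)‖ ^ δ₁ * ‖y₁ - y₂‖ ^ δ₂))
    (T : ℝ) (hT : 0 < T) (B : ℝ) (hB : 0 < B) :
    ∃ C : ℝ, 0 ≤ C ∧ ∀ w₁ w₂ : ℝ → V,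
      AEStronglyMeasurable w₁ (volume.restrict (Set.Ioo 0 T)) →
      AEStronglyMeasurable w₂ (volume.restrict (Set.Ioo 0 T)) →
      eLpNorm w₁ 2 (volume.restrict (Set.Ioo 0 T)) ≤ ENNReal.ofReal B →
      eLpNorm w₂ 2 (volume.restrict (Set.Ioo 0 T)) ≤ ENNReal.ofReal B →
      (∀ᵐ t ∂(volume.restrict (Set.Ioo 0 T)), ‖ι (w₁ t)‖ ≤ B) →
      (∀ᵐ t ∂(volume.restrict (Set.Ioo 0 T)), ‖ι (w₂ t)‖ ≤ B) →
      eLpNorm (fun t => N (w₁ t) - N (w₂ t)) 2 (volume.restrict (Set.Ioo 0 T))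
        ≤ ENNReal.ofReal C *
          eLpNorm (fun t => ι (w₁ t) - ι (w₂ t)) 2 (volume.restrict (Set.Ioo 0 T))
            ^ (1 - ζ₂ - δ₂) :=
  stmt17_general ι N CN ζ₁ ζ₂ δ₁ δ₂ hCN hζ₁ hζ₂ hδ₂ hlt hge hN T B hB
end
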